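/- arXiv:2509.07921 — 5 statements merged into one kernel-verified Lean document; each statement's English description precedes it below -/
import Mathlib

section
/- The middle algebra with its full differential is a differential graded algebra: for the differential d^M = d^M_SFT + δ^M_str on A^M (equivalently, d^M(x) = {h^M, x} + δ^M_str(x)), one has d^M ∘ d^M = 0. -/
open MvPolynomial

/-- Raw generator names for the middle algebra. -/
inductive MGenRaw (n : ℕ) : Type
  | aL (i j : Fin n) : MGenRaw n
  | aR (i j : Fin n) : MGenRaw n
  | bL (i j : Fin n) : MGenRaw n
  | bR (i j : Fin n) : MGenRaw n

/-- Validity of a raw generator name, given the two pairings. -/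
def MGenValid {n : ℕ} (sL sR : Equiv.Perm (Fin n)) : MGenRaw n → Prop
  | .aL i j => i < j
  | .aR i j => i < j
  | .bL i j => i < j ∧ sL i = j
  | .bR i j => i < j ∧ sR i = j

/-- Generators of the middle algebra `A^M`. -/
def MGen (n : ℕ) (sL sR : Equiv.Perm (Fin n)) : Type :=
  {g : MGenRaw n // MGenValid sL sR g}

/-- The middle algebra `A^M`: the free commutative unital `𝔽₂`-algebra on the generators. -/
abbrev AM (n : ℕ) (sL sR : Equiv.Perm (Fin n)) : Type :=
  MvPolynomial (MGen n sL sR) (ZMod 2)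

/-- The generator `α^L_{ij}` (or `0` if `¬ i < j`). -/
noncomputable def genAL {n : ℕ} (sL sR : Equiv.Perm (Fin n)) (i j : Fin n) : AM n sL sR :=
  if h : i < j then X (⟨MGenRaw.aL i j, h⟩ : MGen n sL sR) else 0

/-- The generator `α^R_{ij}` (or `0` if `¬ i < j`). -/
noncomputable def genAR {n : ℕ} (sL sR : Equiv.Perm (Fin n)) (i j : Fin n) : AM n sL sR :=
  if h : i < j then X (⟨MGenRaw.aR i j, h⟩ : MGen n sL sR) else 0

/-- The generator `β^L_{ij}` (or `0` if invalid). -/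
noncomputable def genBL {n : ℕ} (sL sR : Equiv.Perm (Fin n)) (i j : Fin n) : AM n sL sR :=
  if h : i < j ∧ sL i = j then X (⟨MGenRaw.bL i j, h⟩ : MGen n sL sR) else 0

/-- The generator `β^R_{ij}` (or `0` if invalid). -/
noncomputable def genBR {n : ℕ} (sL sR : Equiv.Perm (Fin n)) (i j : Fin n) : AM n sL sR :=
  if h : i < j ∧ sR i = j then X (⟨MGenRaw.bR i j, h⟩ : MGen n sL sR) else 0

/-- The path `1, β^R(1), β^L(β^R(1)), …` (with `1` rendered as `0 : Fin n`). -/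
def pathSeq {n : ℕ} [NeZero n] (sL sR : Equiv.Perm (Fin n)) : ℕ → Fin n
  | 0 => 0
  | k + 1 => if k % 2 = 0 then sR (pathSeq sL sR k) else sL (pathSeq sL sR k)

/-- The β-generator traversed at step `k` of the path (indices in increasing order). -/
noncomputable def stepGen {n : ℕ} [NeZero n] (sL sR : Equiv.Perm (Fin n)) (k : ℕ) :
    AM n sL sR :=
  if k % 2 = 0 then
    genBR sL sR (min (pathSeq sL sR k) (pathSeq sL sR (k + 1)))
      (max (pathSeq sL sR k) (pathSeq sL sR (k + 1)))
  else
    genBL sL sR (min (pathSeq sL sR k) (pathSeq sL sR (k + 1)))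
      (max (pathSeq sL sR k) (pathSeq sL sR (k + 1)))

/-- `γ_i`: the sum of the β-generators along the path from `1` to the first occurrence of `i`. -/
noncomputable def gammaEl {n : ℕ} [NeZero n] (sL sR : Equiv.Perm (Fin n))
    (hvisit : ∀ i : Fin n, ∃ m, pathSeq sL sR m = i) (i : Fin n) : AM n sL sR :=
  ∑ k ∈ Finset.range (Nat.find (hvisit i)), stepGen sL sR k

/-- Values of the string differential `δ^M_str` on generators. -/
noncomputable def deltaStrVal {n : ℕ} [NeZero n] (sL sR : Equiv.Perm (Fin n))
    (hvisit : ∀ i : Fin n, ∃ m, pathSeq sL sR m = i) : MGen n sL sR → AM n sL sR :=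
  fun g =>
    match g.1 with
    | .aR i j =>
        (gammaEl sL sR hvisit i + gammaEl sL sR hvisit j) * genAR sL sR i j
          + ∑ k : Fin n, if i < k ∧ k < j then genAR sL sR i k * genAR sL sR k j else 0
    | .aL i j =>
        (gammaEl sL sR hvisit i + gammaEl sL sR hvisit j) * genAL sL sR i j
          + ∑ k : Fin n, if i < k ∧ k < j then genAL sL sR i k * genAL sL sR k j else 0
    | .bR i j => genBR sL sR i j ^ 2
    | .bL i j => genBL sL sR i j ^ 2

/-- The common value of `d^M_SFT` on the β-generators `β^x_{ij}`. -/
noncomputable def betaSFTVal {n : ℕ} (sL sR : Equiv.Perm (Fin n)) (i j : Fin n) : AM n sL sR :=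
  (∑ k : Fin n, if k < i then genAL sL sR k i * genAR sL sR k i else 0)
    + (∑ k : Fin n, if i < k ∧ k ≠ j then genAL sL sR i k * genAR sL sR i k else 0)
    + (∑ k : Fin n, if k < j ∧ k ≠ i then genAL sL sR k j * genAR sL sR k j else 0)
    + (∑ k : Fin n, if j < k then genAL sL sR j k * genAR sL sR j k else 0)

/-- Values of the SFT differential `d^M_SFT` on generators. -/
noncomputable def dSFTVal {n : ℕ} (sL sR : Equiv.Perm (Fin n)) : MGen n sL sR → AM n sL sR :=
  fun g =>
    match g.1 with
    | .aR i j =>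
        (∑ k : Fin n, if j < k then genAR sL sR i k * genAL sL sR j k else 0)
          + (∑ k : Fin n, if k < i then genAR sL sR k j * genAL sL sR k i else 0)
    | .aL i j =>
        (∑ k : Fin n, if j < k then genAL sL sR i k * genAR sL sR j k else 0)
          + (∑ k : Fin n, if k < i then genAL sL sR k j * genAR sL sR k i else 0)
    | .bL i j => betaSFTVal sL sR i j
    | .bR i j => betaSFTVal sL sR i j

/-- The prescribed values of the SFT bracket on pairs of generators. -/
noncomputable def mBrVal {n : ℕ} (sL sR : Equiv.Perm (Fin n)) :
    MGen n sL sR → MGen n sL sR → AM n sL sR :=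
  fun g g' =>
    match g.1, g'.1 with
    | .aL i j, .aL k l =>
        if j = k then genAL sL sR i l else if i = l then genAL sL sR k j else 0
    | .aR i j, .aR k l =>
        if j = k then genAR sL sR i l else if i = l then genAR sL sR k j else 0
    | .aL i j, .bL k l =>
        if Xor (i = k ∨ i = l) (j = k ∨ j = l) then genAL sL sR i j else 0
    | .bL k l, .aL i j =>
        if Xor (i = k ∨ i = l) (j = k ∨ j = l) then genAL sL sR i j else 0
    | .aR i j, .bR k l =>
        if Xor (i = k ∨ i = l) (j = k ∨ j = l) then genAR sL sR i j else 0
    | .bR k l, .aR i j =>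
        if Xor (i = k ∨ i = l) (j = k ∨ j = l) then genAR sL sR i j else 0
    | _, _ => 0

/-- `Br` is *the* SFT bracket: the symmetric `𝔽₂`-bilinear operation on `A^M` satisfying the
Leibniz rule in each variable and taking the prescribed values on generators. -/
def IsSFTBracket {n : ℕ} (sL sR : Equiv.Perm (Fin n))
    (Br : AM n sL sR → AM n sL sR → AM n sL sR) : Prop :=
  (∀ x y, Br x y = Br y x) ∧
    (∀ x y z, Br x (y + z) = Br x y + Br x z) ∧
    (∀ x y z, Br x (y * z) = Br x y * z + y * Br x z) ∧
    (∀ g g' : MGen n sL sR, Br (X g) (X g') = mBrVal sL sR g g')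

/-- The Hamiltonian `h^M = Σ_{i<j} α^L_{ij} α^R_{ij}`. -/
noncomputable def hamM {n : ℕ} (sL sR : Equiv.Perm (Fin n)) : AM n sL sR :=
  ∑ i : Fin n, ∑ j : Fin n, if i < j then genAL sL sR i j * genAR sL sR i j else 0

/-- The quadratic Hamiltonian `h^M_2`. -/
noncomputable def hamM2 {n : ℕ} (sL sR : Equiv.Perm (Fin n)) : AM n sL sR :=
  (∑ i : Fin n, ∑ k : Fin n, ∑ j : Fin n,
      if i < k ∧ k < j then genAR sL sR i k * genAR sL sR k j * genAL sL sR i j else 0)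
    + (∑ i : Fin n, ∑ k : Fin n, ∑ j : Fin n,
      if i < k ∧ k < j then genAL sL sR i k * genAL sL sR k j * genAR sL sR i j else 0)

/-- Maslov weights of generators, given a Maslov potential `μ`. -/
def mWeight {n : ℕ} (sL sR : Equiv.Perm (Fin n)) (μ : Fin n → ℤ) : MGen n sL sR → ℤ :=
  fun g =>
    match g.1 with
    | .aL i j => μ i - μ j - 1
    | .aR i j => μ j - μ i - 1
    | .bL _ _ => -1
    | .bR _ _ => -1

/-! Collect the α-generators into one matrix `A`, with `A_ij = α^R_ij` and `A_ji = α^L_ij` for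
`i < j`. Then `d = d_SFT + δ_str` acts by `dA = ΓA + AΓ + A² + Q`, where `Γ = diag γ` and
`Q = diag (A²)` has entries `q_i = Σ α^L α^R` over the pairs containing `i`; moreover
`dβ_ij = β_ij² + q_i + q_j`, and telescoping along the path gives `dγ_i = γ_i² + q_1 + q_i`.
In characteristic 2, `d(A²) = ΓA² + A²Γ + QA + AQ` has zero diagonal, so `dQ = 0`, and every
term of `d(dA)` occurs twice. So `d²` kills the generators, and `d²` is itself a derivation
since `2 = 0`. -/

open Matrix

theorem Matrix.two_zsmul_eq_zero {n R : Type*} [Ring R] [CharP R 2] (B : Matrix n n R) :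
    (2 : ℤ) • B = 0 := by
  ext; simp [CharTwo.two_eq_zero]

namespace Derivation

variable {S R : Type*} [CommRing S] [CommRing R] [Algebra S R] (d : Derivation S R R)

theorem matrix_map_mul {m n p : Type*} [Fintype n] (M : Matrix m n R) (N : Matrix n p R) :
    (M * N).map d = M.map d * N + M * N.map d := by
  ext i k
  simp [mul_apply, Finset.sum_add_distrib, mul_comm, add_comm]

variable [CharP R 2]

theorem apply_sq_eq_zero (a : R) : d (a ^ 2) = 0 := by
  rw [sq, leibniz, smul_eq_mul, CharTwo.add_self_eq_zero]

theorem apply_apply_mul (a b : R) : d (d (a * b)) = a • d (d b) + b • d (d a) := by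
  simp only [leibniz, map_add, smul_eq_mul]
  linear_combination CharTwo.add_self_eq_zero (d a * d b)

theorem apply_min_max_of_involutive {ι : Type*} [LinearOrder ι] {σ : ι → ι}
    (hσ : Function.Involutive σ) {f : ι → ι → R} {q : ι → R} (hdiag : ∀ i, f i i = 0)
    (hf : ∀ i j, i < j → σ i = j → d (f i j) = f i j ^ 2 + q i + q j) (u : ι) :
    d (f (min u (σ u)) (max u (σ u))) = f (min u (σ u)) (max u (σ u)) ^ 2 + q u + q (σ u) := by
  rcases lt_trichotomy u (σ u) with h | h | h
  · rw [min_eq_left h.le, max_eq_right h.le, hf _ _ h rfl]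
  · rw [← h, min_self, max_self, hdiag, map_zero, add_assoc, CharTwo.add_self_eq_zero,
      zero_pow two_ne_zero, add_zero]
  · rw [min_eq_right h.le, max_eq_left h.le, hf _ _ h (hσ u), add_right_comm]

variable {n : Type*} [Fintype n] [DecidableEq n] {X : Matrix n n R} {γ : n → R}

theorem matrix_map_mul_self
    (hX : X.map d = diagonal γ * X + X * diagonal γ + X * X + diagonal (X * X).diag) :
    (X * X).map d = diagonal γ * (X * X) + X * X * diagonal γ
      + diagonal (X * X).diag * X + X * diagonal (X * X).diag := by
  rw [d.matrix_map_mul, hX]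
  simp only [add_mul, mul_add, mul_assoc]
  abel_nf
  simp only [two_zsmul_eq_zero, zero_add]

theorem apply_mul_self_diag_eq_zero
    (hX : X.map d = diagonal γ * X + X * diagonal γ + X * X + diagonal (X * X).diag) (i : n) :
    d ((X * X) i i) = 0 := by
  have h := congr_fun₂ (d.matrix_map_mul_self hX) i i
  simp only [map_apply, Matrix.add_apply, diagonal_mul, mul_diagonal, diag_apply] at h
  rw [h]
  linear_combination CharTwo.add_self_eq_zero (γ i * (X * X) i i)
    + CharTwo.add_self_eq_zero ((X * X) i i * X i i)

theorem matrix_map_map_eq_zero {c : R}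
    (hX : X.map d = diagonal γ * X + X * diagonal γ + X * X + diagonal (X * X).diag)
    (hγ : ∀ i, d (γ i) = γ i ^ 2 + c + (X * X) i i) :
    (X.map d).map d = 0 := by
  have hsq := d.matrix_map_mul_self hX
  set Γ := diagonal γ
  set Q := diagonal (X * X).diag
  have hQ : Q.map d = 0 := by
    rw [diagonal_map (map_zero d), ← diagonal_zero]
    exact congrArg diagonal (funext (d.apply_mul_self_diag_eq_zero hX))
  have hΓ : Γ.map d = Γ * Γ + c • 1 + Q := by
    rw [diagonal_map (map_zero d), diagonal_mul_diagonal, smul_one_eq_diagonal, diagonal_add,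
      diagonal_add]
    exact congrArg diagonal (funext fun i => by rw [hγ, sq]; rfl)
  have hQΓ : Q * Γ = Γ * Q := by
    simp only [Q, Γ, diagonal_mul_diagonal, mul_comm]
  have hadd := Matrix.map_add (m := n) (n := n) d (map_add d)
  rw [hX, hadd, hadd, hadd, d.matrix_map_mul, d.matrix_map_mul, hsq, hQ, hΓ, hX]
  simp only [add_mul, mul_add, mul_assoc, smul_mul_assoc, mul_smul_comm, one_mul, mul_one, hQΓ]
  abel_nf
  simp only [two_zsmul_eq_zero, zero_add]

end Derivation

theorem MvPolynomial.derivation_apply_apply_eq_zero {σ R : Type*} [CommRing R] [CharP R 2]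
    (D : Derivation R (MvPolynomial σ R) (MvPolynomial σ R)) (h : ∀ i, D (D (X i)) = 0)
    (p : MvPolynomial σ R) : D (D p) = 0 := by
  induction p using MvPolynomial.induction_on with
  | C a => rw [derivation_C, map_zero]
  | add p q hp hq => rw [map_add, map_add, hp, hq, add_zero]
  | mul_X p i hp => rw [D.apply_apply_mul, hp, h, smul_zero, smul_zero, add_zero]

section PairMatrix

variable {ι R : Type*} [LinearOrder ι] [CommRing R]

def pairMatrix (a b : ι → ι → R) : Matrix ι ι R := Matrix.of fun i j => a i j + b j i

variable {a b : ι → ι → R}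

omit [LinearOrder ι] in
theorem pairMatrix_transpose : (pairMatrix a b)ᵀ = pairMatrix b a := by
  ext; simp [pairMatrix, add_comm]

variable [Fintype ι] (ha : ∀ i j, ¬ i < j → a i j = 0) (hb : ∀ i j, ¬ i < j → b i j = 0)
include ha hb

theorem pairMatrix_mul_self_apply_of_lt {i j : ι} (h : i < j) :
    (pairMatrix a b * pairMatrix a b) i j =
      (∑ k, if i < k ∧ k < j then a i k * a k j else 0)
        + (∑ k, if j < k then a i k * b j k else 0)
        + (∑ k, if k < i then a k j * b k i else 0) := by
  have e1 : ∀ k, (if i < k ∧ k < j then a i k * a k j else 0) = a i k * a k j := fun k =>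
    ite_eq_left_iff.2 fun hk => by
      rcases not_and_or.1 hk with hk | hk <;> simp [ha _ _ hk]
  have e2 : ∀ k, (if j < k then a i k * b j k else 0) = a i k * b j k := fun k =>
    ite_eq_left_iff.2 fun hk => by simp [hb _ _ hk]
  have e3 : ∀ k, (if k < i then a k j * b k i else 0) = a k j * b k i := fun k =>
    ite_eq_left_iff.2 fun hk => by simp [hb _ _ hk]
  have e4 : ∀ k, b k i * b j k = 0 := fun k => by
    by_cases hk : k < i
    · rw [hb j k (by order), mul_zero]
    · rw [hb k i hk, zero_mul]
  simp only [e1, e2, e3, mul_apply, pairMatrix, of_apply, add_mul, mul_add, e4, add_zero,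
    Finset.sum_add_distrib, mul_comm (b _ i)]
  abel

theorem pairMatrix_mul_self_apply_self (i : ι) :
    (pairMatrix a b * pairMatrix a b) i i = ∑ k, (a i k * b i k + a k i * b k i) := by
  rw [mul_apply]
  refine Finset.sum_congr rfl fun k _ => ?_
  simp only [pairMatrix, of_apply]
  rcases lt_trichotomy i k with h | rfl | h
  · simp [ha k i (asymm h), hb k i (asymm h)]
  · simp [ha i i (lt_irrefl i), hb i i (lt_irrefl i)]
  · simp [ha i k (asymm h), hb i k (asymm h), mul_comm]

theorem pairMatrix_mul_self_diag_add_diag [CharP R 2] (i j : ι) :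
    (pairMatrix a b * pairMatrix a b) i i + (pairMatrix a b * pairMatrix a b) j j =
      (∑ k, if k < i then b k i * a k i else 0)
        + (∑ k, if i < k ∧ k ≠ j then b i k * a i k else 0)
        + (∑ k, if k < j ∧ k ≠ i then b k j * a k j else 0)
        + (∑ k, if j < k then b j k * a j k else 0) := by
  have e1 : ∀ k, (if k < i then b k i * a k i else 0) = a k i * b k i := fun k => by
    rw [mul_comm]; exact ite_eq_left_iff.2 fun hk => by simp [hb _ _ hk]
  have e2 : ∀ k, (if i < k ∧ k ≠ j then b i k * a i k else 0)
      = a i k * b i k - if k = j then a i j * b i j else 0 := fun k => by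
    by_cases hkj : k = j
    · simp [hkj]
    · by_cases hik : i < k
      · simp [hkj, hik, mul_comm]
      · simp [hkj, hik, ha i k hik]
  have e3 : ∀ k, (if k < j ∧ k ≠ i then b k j * a k j else 0)
      = a k j * b k j - if k = i then a i j * b i j else 0 := fun k => by
    by_cases hki : k = i
    · simp [hki]
    · by_cases hkj : k < j
      · simp [hki, hkj, mul_comm]
      · simp [hki, hkj, ha k j hkj]
  have e4 : ∀ k, (if j < k then b j k * a j k else 0) = a j k * b j k := fun k => by
    rw [mul_comm]; exact ite_eq_left_iff.2 fun hk => by simp [hb _ _ hk]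
  simp only [e1, e2, e3, e4, pairMatrix_mul_self_apply_self ha hb, Finset.sum_sub_distrib,
    Finset.sum_ite_eq', Finset.mem_univ, if_true, Finset.sum_add_distrib]
  linear_combination CharTwo.add_self_eq_zero (a i j * b i j)

end PairMatrix

section MiddleAlgebra

variable {n : ℕ} {sL sR : Equiv.Perm (Fin n)} {i j : Fin n}

theorem genAR_of_lt (h : i < j) : genAR sL sR i j = X (⟨.aR i j, h⟩ : MGen n sL sR) := dif_pos h
theorem genAL_of_lt (h : i < j) : genAL sL sR i j = X (⟨.aL i j, h⟩ : MGen n sL sR) := dif_pos h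
theorem genBR_of_isPair (h : i < j ∧ sR i = j) :
    genBR sL sR i j = X (⟨.bR i j, h⟩ : MGen n sL sR) := dif_pos h
theorem genBL_of_isPair (h : i < j ∧ sL i = j) :
    genBL sL sR i j = X (⟨.bL i j, h⟩ : MGen n sL sR) := dif_pos h

theorem genAR_of_not_lt (h : ¬ i < j) : genAR sL sR i j = 0 := dif_neg h
theorem genAL_of_not_lt (h : ¬ i < j) : genAL sL sR i j = 0 := dif_neg h
theorem genBR_self : genBR sL sR i i = 0 := dif_neg fun h => lt_irrefl i h.1
theorem genBL_self : genBL sL sR i i = 0 := dif_neg fun h => lt_irrefl i h.1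

/-- The α-generators as one matrix: `α^R_{ij}` above the diagonal, `α^L_{ji}` below it. -/
noncomputable def alphaMatrix (sL sR : Equiv.Perm (Fin n)) : Matrix (Fin n) (Fin n) (AM n sL sR) :=
  pairMatrix (genAR sL sR) (genAL sL sR)

theorem alphaMatrix_apply_of_lt (h : i < j) : alphaMatrix sL sR i j = genAR sL sR i j := by
  simp [alphaMatrix, pairMatrix, genAL_of_not_lt (asymm h)]

theorem alphaMatrix_apply_of_gt (h : j < i) : alphaMatrix sL sR i j = genAL sL sR j i := by
  simp [alphaMatrix, pairMatrix, genAR_of_not_lt (asymm h)]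

theorem alphaMatrix_apply_self : alphaMatrix sL sR i i = 0 := by
  simp [alphaMatrix, pairMatrix, genAR_of_not_lt, genAL_of_not_lt]

theorem betaSFTVal_eq (i j : Fin n) :
    betaSFTVal sL sR i j
      = (alphaMatrix sL sR * alphaMatrix sL sR) i i + (alphaMatrix sL sR * alphaMatrix sL sR) j j :=
  (pairMatrix_mul_self_diag_add_diag (fun _ _ => genAR_of_not_lt) (fun _ _ => genAL_of_not_lt)
    i j).symm

variable [NeZero n] {hvisit : ∀ i : Fin n, ∃ m, pathSeq sL sR m = i}
  {D : Derivation (ZMod 2) (AM n sL sR) (AM n sL sR)}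
  (hD : ∀ g, D (X g) = dSFTVal sL sR g + deltaStrVal sL sR hvisit g)
include hD

theorem apply_genAR_of_lt (h : i < j) :
    D (genAR sL sR i j) = (gammaEl sL sR hvisit i + gammaEl sL sR hvisit j) * genAR sL sR i j
      + (alphaMatrix sL sR * alphaMatrix sL sR) i j := by
  rw [(congrArg D (genAR_of_lt h)).trans (hD _), alphaMatrix,
    pairMatrix_mul_self_apply_of_lt (fun _ _ => genAR_of_not_lt) (fun _ _ => genAL_of_not_lt) h]
  simp only [dSFTVal, deltaStrVal]
  ring

theorem apply_genAL_of_lt (h : i < j) :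
    D (genAL sL sR i j) = (gammaEl sL sR hvisit i + gammaEl sL sR hvisit j) * genAL sL sR i j
      + (alphaMatrix sL sR * alphaMatrix sL sR) j i := by
  rw [(congrArg D (genAL_of_lt h)).trans (hD _), ← transpose_apply (alphaMatrix sL sR * _),
    transpose_mul, alphaMatrix, pairMatrix_transpose,
    pairMatrix_mul_self_apply_of_lt (fun _ _ => genAL_of_not_lt) (fun _ _ => genAR_of_not_lt) h]
  simp only [dSFTVal, deltaStrVal]
  ring

theorem map_alphaMatrix :
    (alphaMatrix sL sR).map D
      = diagonal (gammaEl sL sR hvisit) * alphaMatrix sL sR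
        + alphaMatrix sL sR * diagonal (gammaEl sL sR hvisit)
        + alphaMatrix sL sR * alphaMatrix sL sR
        + diagonal (alphaMatrix sL sR * alphaMatrix sL sR).diag := by
  ext i j : 1
  simp only [map_apply, Matrix.add_apply, diagonal_mul, mul_diagonal, diagonal_apply, diag_apply]
  rcases lt_trichotomy i j with h | rfl | h
  · rw [if_neg h.ne, alphaMatrix_apply_of_lt h, apply_genAR_of_lt hD h]
    ring
  · rw [if_pos rfl, alphaMatrix_apply_self, map_zero, mul_zero, zero_mul, add_zero, zero_add]
    exact (CharTwo.add_self_eq_zero _).symm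
  · rw [if_neg h.ne', alphaMatrix_apply_of_gt h, apply_genAL_of_lt hD h]
    ring

theorem apply_genBR_of_isPair (h : i < j ∧ sR i = j) :
    D (genBR sL sR i j) = genBR sL sR i j ^ 2 + (alphaMatrix sL sR * alphaMatrix sL sR) i i
      + (alphaMatrix sL sR * alphaMatrix sL sR) j j := by
  rw [(congrArg D (genBR_of_isPair h)).trans (hD _), add_assoc, ← betaSFTVal_eq, add_comm]
  simp only [dSFTVal, deltaStrVal, genBR_of_isPair h]

theorem apply_genBL_of_isPair (h : i < j ∧ sL i = j) :
    D (genBL sL sR i j) = genBL sL sR i j ^ 2 + (alphaMatrix sL sR * alphaMatrix sL sR) i i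
      + (alphaMatrix sL sR * alphaMatrix sL sR) j j := by
  rw [(congrArg D (genBL_of_isPair h)).trans (hD _), add_assoc, ← betaSFTVal_eq, add_comm]
  simp only [dSFTVal, deltaStrVal, genBL_of_isPair h]

variable (hsLinv : ∀ i, sL (sL i) = i) (hsRinv : ∀ i, sR (sR i) = i)
include hsLinv hsRinv

theorem apply_stepGen (k : ℕ) :
    D (stepGen sL sR k) = stepGen sL sR k ^ 2
      + (alphaMatrix sL sR * alphaMatrix sL sR) (pathSeq sL sR k) (pathSeq sL sR k)
      + (alphaMatrix sL sR * alphaMatrix sL sR) (pathSeq sL sR (k + 1))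
          (pathSeq sL sR (k + 1)) := by
  have hp : pathSeq sL sR (k + 1)
      = if k % 2 = 0 then sR (pathSeq sL sR k) else sL (pathSeq sL sR k) := rfl
  rw [stepGen, hp]
  split_ifs
  · exact D.apply_min_max_of_involutive hsRinv (fun _ => genBR_self)
      (fun _ _ hij hσ => apply_genBR_of_isPair hD ⟨hij, hσ⟩) _
  · exact D.apply_min_max_of_involutive hsLinv (fun _ => genBL_self)
      (fun _ _ hij hσ => apply_genBL_of_isPair hD ⟨hij, hσ⟩) _

theorem apply_gammaEl (i : Fin n) :
    D (gammaEl sL sR hvisit i) = gammaEl sL sR hvisit i ^ 2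
      + (alphaMatrix sL sR * alphaMatrix sL sR) 0 0
      + (alphaMatrix sL sR * alphaMatrix sL sR) i i := by
  have htel := Finset.sum_range_sub'
    (fun k => (alphaMatrix sL sR * alphaMatrix sL sR) (pathSeq sL sR k) (pathSeq sL sR k))
    (Nat.find (hvisit i))
  simp only [CharTwo.sub_eq_add, Nat.find_spec (hvisit i)] at htel
  rw [gammaEl, map_sum, Finset.sum_congr rfl fun k _ => apply_stepGen hD hsLinv hsRinv k,
    CharTwo.sum_sq]
  simp only [add_assoc, Finset.sum_add_distrib, htel]
  rfl

theorem apply_apply_X_eq_zero (g : MGen n sL sR) : D (D (X g)) = 0 := by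
  have hA := map_alphaMatrix hD
  have hAA := D.matrix_map_map_eq_zero hA (apply_gammaEl hD hsLinv hsRinv)
  obtain ⟨g, hg⟩ := g
  cases g with
  | aL i j =>
    have e : alphaMatrix sL sR j i = X ⟨.aL i j, hg⟩ :=
      (alphaMatrix_apply_of_gt hg).trans (genAL_of_lt hg)
    exact e ▸ congr_fun₂ hAA j i
  | aR i j =>
    have e : alphaMatrix sL sR i j = X ⟨.aR i j, hg⟩ :=
      (alphaMatrix_apply_of_lt hg).trans (genAR_of_lt hg)
    exact e ▸ congr_fun₂ hAA i j
  | bL i j =>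
    have e : genBL sL sR i j = X ⟨.bL i j, hg⟩ := genBL_of_isPair hg
    rw [← e, apply_genBL_of_isPair hD hg, map_add, map_add, D.apply_sq_eq_zero,
      D.apply_mul_self_diag_eq_zero hA, D.apply_mul_self_diag_eq_zero hA, add_zero, add_zero]
  | bR i j =>
    have e : genBR sL sR i j = X ⟨.bR i j, hg⟩ := genBR_of_isPair hg
    rw [← e, apply_genBR_of_isPair hD hg, map_add, map_add, D.apply_sq_eq_zero,
      D.apply_mul_self_diag_eq_zero hA, D.apply_mul_self_diag_eq_zero hA, add_zero, add_zero]

end MiddleAlgebra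

theorem middle_dM_squared_zero_general {n : ℕ} [NeZero n]
    (sL sR : Equiv.Perm (Fin n))
    (hsLinv : ∀ i, sL (sL i) = i)
    (hsRinv : ∀ i, sR (sR i) = i)
    (hvisit : ∀ i : Fin n, ∃ m, pathSeq sL sR m = i)
    (Dstr : Derivation (ZMod 2) (AM n sL sR) (AM n sL sR))
    (hDstr : ∀ g : MGen n sL sR, Dstr (X g) = deltaStrVal sL sR hvisit g)
    (Dsft : Derivation (ZMod 2) (AM n sL sR) (AM n sL sR))
    (hDsft : ∀ g : MGen n sL sR, Dsft (X g) = dSFTVal sL sR g) :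
    ∀ x : AM n sL sR, Dsft (Dsft x + Dstr x) + Dstr (Dsft x + Dstr x) = 0 := by
  have hD : ∀ g, (Dsft + Dstr) (X g) = dSFTVal sL sR g + deltaStrVal sL sR hvisit g := fun g => by
    rw [Derivation.add_apply, hDsft, hDstr]
  intro x
  simpa using MvPolynomial.derivation_apply_apply_eq_zero _
    (apply_apply_X_eq_zero hD hsLinv hsRinv) x

/-- The middle algebra with its full differential
`d^M = d^M_SFT + δ^M_str` is a DGA: `d^M ∘ d^M = 0`. -/
theorem middle_dM_squared_zero {n : ℕ} [NeZero n] (hn2 : 2 ≤ n) (hnEven : Even n)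
    (sL sR : Equiv.Perm (Fin n))
    (hsLne : ∀ i, sL i ≠ i) (hsLinv : ∀ i, sL (sL i) = i)
    (hsRne : ∀ i, sR i ≠ i) (hsRinv : ∀ i, sR (sR i) = i)
    (hvisit : ∀ i : Fin n, ∃ m, pathSeq sL sR m = i)
    (Dstr : Derivation (ZMod 2) (AM n sL sR) (AM n sL sR))
    (hDstr : ∀ g : MGen n sL sR, Dstr (X g) = deltaStrVal sL sR hvisit g)
    (Dsft : Derivation (ZMod 2) (AM n sL sR) (AM n sL sR))
    (hDsft : ∀ g : MGen n sL sR, Dsft (X g) = dSFTVal sL sR g) :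
    ∀ x : AM n sL sR, Dsft (Dsft x + Dstr x) + Dstr (Dsft x + Dstr x) = 0 :=
  middle_dM_squared_zero_general sL sR hsLinv hsRinv hvisit Dstr hDstr Dsft hDsft
end

section
/- The SFT bracket on the middle algebra satisfies the Jacobi identity: for all x, y, z ∈ A^M, {x, {y, z}} + {y, {z, x}} + {z, {x, y}} = 0. -/
open MvPolynomial

/-!
Sending `α^x_{ij} ↦ E_{ij}` and `β^x_{kl} ↦ E_{kk} + E_{ll}` in the `x`-block of `gl_{2n}(𝔽₂)`
turns the bracket of two generators into the commutator of their matrices (signs are invisible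
in characteristic two), and every such commutator is strictly upper triangular inside a block,
i.e. a combination of the `α`'s. So on generators the Jacobi identity is inherited from the
associative algebra of matrices.

To pass from generators to all of `A^M`, note that `{x, ·}` is a derivation, so in its last
argument the Jacobiator is the derivation `[{x, ·}, {y, ·}] + {{x, y}, ·}`; it vanishes as soon
as it vanishes on generators, and since the Jacobiator is invariant under cyclic permutations,
one argument at a time can be reduced to a generator.
-/

section Jacobiator

variable {A : Type*} [CommRing A]

def jacobiator (Br : A → A → A) (x y z : A) : A :=
  Br x (Br y z) + Br y (Br z x) + Br z (Br x y)

theorem jacobiator_rotate (Br : A → A → A) (x y z : A) :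
    jacobiator Br x y z = jacobiator Br z x y := by
  unfold jacobiator; abel

theorem jacobiator_eq_lie_add {R : Type*} [CommRing R] [Algebra R A] [CharP A 2]
    (D : A → Derivation R A A) (hD : ∀ x y, D x y = D y x) (x y z : A) :
    jacobiator (D · ·) x y z = (⁅D x, D y⁆ + D (D x y)) z := by
  rw [Derivation.add_apply, Derivation.commutator_apply, CharTwo.sub_eq_add, jacobiator,
    hD z x, hD z (D x y)]

end Jacobiator

namespace MvPolynomial

variable {R σ : Type*} [CommRing R] [CharP R 2]

theorem jacobiator_eq_zero_of_forall_X
    (D : MvPolynomial σ R → Derivation R (MvPolynomial σ R) (MvPolynomial σ R))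
    (hD : ∀ x y, D x y = D y x) {u v : MvPolynomial σ R}
    (h : ∀ c, jacobiator (D · ·) u v (X c) = 0) (w : MvPolynomial σ R) :
    jacobiator (D · ·) u v w = 0 := by
  have hder : ⁅D u, D v⁆ + D (D u v) = 0 :=
    derivation_ext fun c => by rw [← jacobiator_eq_lie_add D hD, h c]; rfl
  rw [jacobiator_eq_lie_add D hD, hder]
  rfl

theorem jacobiator_eq_zero
    (D : MvPolynomial σ R → Derivation R (MvPolynomial σ R) (MvPolynomial σ R))
    (hD : ∀ x y, D x y = D y x) (hX : ∀ a b c, jacobiator (D · ·) (X a) (X b) (X c) = 0)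
    (x y z : MvPolynomial σ R) : jacobiator (D · ·) x y z = 0 := by
  have h₁ (a b w) : jacobiator (D · ·) (X a) (X b) w = 0 :=
    jacobiator_eq_zero_of_forall_X D hD (hX a b) w
  have h₂ (a v w) : jacobiator (D · ·) w (X a) v = 0 := by
    refine jacobiator_eq_zero_of_forall_X D hD (fun b => ?_) v
    rw [← jacobiator_rotate]
    exact h₁ a b w
  refine jacobiator_eq_zero_of_forall_X D hD (fun a => ?_) z
  rw [jacobiator_rotate, jacobiator_rotate]
  exact h₂ a x y

end MvPolynomial

attribute [local instance] LieRing.ofAssociativeRing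

namespace Matrix

variable {ι R : Type*} [Fintype ι] [CommRing R]

theorem lie_single_single [DecidableEq ι] (p q r s : ι) (a b : R) :
    ⁅single p q a, single r s b⁆ =
      (if q = r then single p s (a * b) else 0) - if s = p then single r q (b * a) else 0 := by
  rw [Ring.lie_def]
  congr 1 <;> split_ifs with h
  all_goals first
    | (subst h; exact single_mul_single_same ..)
    | exact single_mul_single_of_ne _ _ _ _ h _

theorem lie_apply_eq_zero_of_not_lt [PartialOrder ι] {A B : Matrix ι ι R}
    (hA : ∀ p q, ¬ p ≤ q → A p q = 0) (hB : ∀ p q, ¬ p ≤ q → B p q = 0) {p q : ι}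
    (hpq : ¬ p < q) : ⁅A, B⁆ p q = 0 := by
  have hterm (M N : Matrix ι ι R) (hM : ∀ p q, ¬ p ≤ q → M p q = 0)
      (hN : ∀ p q, ¬ p ≤ q → N p q = 0) (r : ι) (hr : ¬ (p ≤ r ∧ r ≤ q)) :
      M p r * N r q = 0 := by
    by_cases hpr : p ≤ r
    · rw [hN r q fun hrq => hr ⟨hpr, hrq⟩, mul_zero]
    · rw [hM p r hpr, zero_mul]
  rw [Ring.lie_def, sub_apply, mul_apply, mul_apply]
  by_cases hle : p ≤ q
  · obtain rfl : p = q := hle.eq_of_not_lt hpq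
    have hdiag (M N : Matrix ι ι R) (hM : ∀ p q, ¬ p ≤ q → M p q = 0)
        (hN : ∀ p q, ¬ p ≤ q → N p q = 0) : ∑ r, M p r * N r p = M p p * N p p :=
      Finset.sum_eq_single p (fun r _ hrp => hterm M N hM hN r fun h => hrp (h.2.antisymm h.1))
        (by simp)
    rw [hdiag A B hA hB, hdiag B A hB hA, mul_comm, sub_self]
  · rw [Finset.sum_eq_zero fun r _ => hterm A B hA hB r fun h => hle (h.1.trans h.2),
      Finset.sum_eq_zero fun r _ => hterm B A hB hA r fun h => hle (h.1.trans h.2), sub_self]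

end Matrix

namespace MGenRaw

variable {n : ℕ}

def toMatrix : MGenRaw n → Matrix (Fin n ⊕ Fin n) (Fin n ⊕ Fin n) (ZMod 2)
  | aL i j => Matrix.single (.inl i) (.inl j) 1
  | aR i j => Matrix.single (.inr i) (.inr j) 1
  | bL k l => Matrix.single (.inl k) (.inl k) 1 + Matrix.single (.inl l) (.inl l) 1
  | bR k l => Matrix.single (.inr k) (.inr k) 1 + Matrix.single (.inr l) (.inr l) 1

-- The order on `Fin n ⊕ Fin n` is the disjoint sum: upper triangular includes block diagonal.
theorem toMatrix_apply_eq_zero_of_not_le {sL sR : Equiv.Perm (Fin n)} {g : MGenRaw n}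
    (hg : MGenValid sL sR g) {p q : Fin n ⊕ Fin n} (hpq : ¬ p ≤ q) : g.toMatrix p q = 0 := by
  cases g with
  | aL i j =>
    refine Matrix.single_apply_of_ne _ _ _ _ _ ?_
    rintro ⟨rfl, rfl⟩
    exact hpq (Sum.inl_le_inl_iff.2 (le_of_lt hg))
  | aR i j =>
    refine Matrix.single_apply_of_ne _ _ _ _ _ ?_
    rintro ⟨rfl, rfl⟩
    exact hpq (Sum.inr_le_inr_iff.2 (le_of_lt hg))
  | bL k l | bR k l =>
    rw [toMatrix, Matrix.add_apply, Matrix.single_apply_of_ne, Matrix.single_apply_of_ne,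
      add_zero] <;>
      exact fun ⟨hp, hq⟩ => hpq (hp ▸ hq ▸ le_rfl)

end MGenRaw

section MatrixModel

variable {n : ℕ} (sL sR : Equiv.Perm (Fin n))

theorem genAL_self (i : Fin n) : genAL sL sR i i = 0 := dif_neg (lt_irrefl i)

theorem genAR_self (i : Fin n) : genAR sL sR i i = 0 := dif_neg (lt_irrefl i)

noncomputable def alphaEntry : Fin n ⊕ Fin n → Fin n ⊕ Fin n → AM n sL sR
  | .inl i, .inl j => genAL sL sR i j
  | .inr i, .inr j => genAR sL sR i j
  | _, _ => 0

noncomputable def alphaOfMatrix :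
    Matrix (Fin n ⊕ Fin n) (Fin n ⊕ Fin n) (ZMod 2) →ₗ[ZMod 2] AM n sL sR :=
  Matrix.liftLinear (ZMod 2) fun p q => LinearMap.toSpanSingleton (ZMod 2) _ (alphaEntry sL sR p q)

theorem alphaOfMatrix_single (p q : Fin n ⊕ Fin n) (c : ZMod 2) :
    alphaOfMatrix sL sR (Matrix.single p q c) = c • alphaEntry sL sR p q := by
  simp [alphaOfMatrix]

theorem exists_alphaEntry_eq_X {p q : Fin n ⊕ Fin n} (hpq : p < q) :
    ∃ g : MGen n sL sR, alphaEntry sL sR p q = X g ∧ g.1.toMatrix = Matrix.single p q 1 := by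
  match p, q, hpq with
  | .inl i, .inl j, h => exact ⟨⟨.aL i j, Sum.inl_lt_inl_iff.1 h⟩, dif_pos _, rfl⟩
  | .inr i, .inr j, h => exact ⟨⟨.aR i j, Sum.inr_lt_inr_iff.1 h⟩, dif_pos _, rfl⟩
  | .inl _, .inr _, h => exact absurd h Sum.not_inl_lt_inr
  | .inr _, .inl _, h => exact absurd h Sum.not_inr_lt_inl

theorem mBrVal_eq_alphaOfMatrix_lie (g g' : MGen n sL sR) :
    mBrVal sL sR g g' = alphaOfMatrix sL sR ⁅g.1.toMatrix, g'.1.toMatrix⁆ := by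
  obtain ⟨g, hg⟩ := g
  obtain ⟨g', hg'⟩ := g'
  cases g <;> cases g' <;>
    simp only [mBrVal, MGenRaw.toMatrix, lie_add, add_lie, Matrix.lie_single_single, map_add,
      map_sub, apply_ite (alphaOfMatrix sL sR), alphaOfMatrix_single, map_zero, mul_one, one_smul,
      alphaEntry, Sum.inl.injEq, Sum.inr.injEq, reduceCtorEq, if_false, sub_zero, add_zero,
      CharTwo.sub_eq_add]
  all_goals split_ifs <;> subst_vars <;>
    simp only [genAL_self, genAR_self, add_zero, zero_add, CharTwo.add_self_eq_zero]
  -- the branches left over are excluded by `i < j` and `k < l`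
  all_goals exfalso; simp only [MGenValid] at hg hg'; grind [Xor]

theorem map_alphaOfMatrix_eq_alphaOfMatrix_lie (δ : AM n sL sR →ₗ[ZMod 2] AM n sL sR)
    (T : Matrix (Fin n ⊕ Fin n) (Fin n ⊕ Fin n) (ZMod 2))
    (hδ : ∀ g : MGen n sL sR, δ (X g) = alphaOfMatrix sL sR ⁅T, g.1.toMatrix⁆)
    {M : Matrix (Fin n ⊕ Fin n) (Fin n ⊕ Fin n) (ZMod 2)} (hM : ∀ p q, ¬ p < q → M p q = 0) :
    δ (alphaOfMatrix sL sR M) = alphaOfMatrix sL sR ⁅T, M⁆ := by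
  rw [M.matrix_eq_sum_single]
  simp only [map_sum, lie_sum]
  refine Finset.sum_congr rfl fun p _ => Finset.sum_congr rfl fun q _ => ?_
  by_cases hpq : p < q
  · obtain ⟨g, hX, hg⟩ := exists_alphaEntry_eq_X sL sR hpq
    have hsingle : Matrix.single p q (M p q) = M p q • g.1.toMatrix := by
      rw [hg, Matrix.smul_single, smul_eq_mul, mul_one]
    rw [alphaOfMatrix_single, hX, hsingle, lie_smul, map_smul, map_smul, hδ g]
  · rw [hM p q hpq, Matrix.single_zero, map_zero, map_zero, lie_zero, map_zero]

theorem jacobiator_X_X_X_eq_zero (Br : AM n sL sR → AM n sL sR → AM n sL sR)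
    (hadd : ∀ x y z, Br x (y + z) = Br x y + Br x z)
    (hgen : ∀ g g' : MGen n sL sR, Br (X g) (X g') = mBrVal sL sR g g') (a b c : MGen n sL sR) :
    jacobiator Br (X a) (X b) (X c) = 0 := by
  have hX (g g' : MGen n sL sR) :
      Br (X g) (X g') = alphaOfMatrix sL sR ⁅g.1.toMatrix, g'.1.toMatrix⁆ :=
    (hgen g g').trans (mBrVal_eq_alphaOfMatrix_lie sL sR g g')
  have hXX (g g' g'' : MGen n sL sR) : Br (X g) (Br (X g') (X g'')) =
      alphaOfMatrix sL sR ⁅g.1.toMatrix, ⁅g'.1.toMatrix, g''.1.toMatrix⁆⁆ := by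
    rw [hX g' g'']
    exact map_alphaOfMatrix_eq_alphaOfMatrix_lie sL sR
      ((AddMonoidHom.mk' (Br (X g)) (hadd _)).toZModLinearMap 2) _ (hX g)
      fun _ _ => Matrix.lie_apply_eq_zero_of_not_lt
        (fun _ _ => MGenRaw.toMatrix_apply_eq_zero_of_not_le g'.2)
        (fun _ _ => MGenRaw.toMatrix_apply_eq_zero_of_not_le g''.2)
  rw [jacobiator, hXX, hXX, hXX, ← map_add, ← map_add, lie_jacobi, map_zero]

end MatrixModel

theorem middle_bracket_jacobi_general {n : ℕ}
    (sL sR : Equiv.Perm (Fin n))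
    (Br : AM n sL sR → AM n sL sR → AM n sL sR)
    (hBr : IsSFTBracket sL sR Br) :
    ∀ x y z : AM n sL sR, Br x (Br y z) + Br y (Br z x) + Br z (Br x y) = 0 := by
  obtain ⟨hsymm, hadd, hmul, hgen⟩ := hBr
  let ad (x : AM n sL sR) : Derivation (ZMod 2) (AM n sL sR) (AM n sL sR) :=
    Derivation.mk' ((AddMonoidHom.mk' (Br x) (hadd x)).toZModLinearMap 2) fun y z => by
      simp [hmul, mul_comm, add_comm]
  exact MvPolynomial.jacobiator_eq_zero ad hsymm (jacobiator_X_X_X_eq_zero sL sR Br hadd hgen)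

/-- The SFT bracket on the middle algebra satisfies the Jacobi identity. -/
theorem middle_bracket_jacobi {n : ℕ} [NeZero n] (hn2 : 2 ≤ n) (hnEven : Even n)
    (sL sR : Equiv.Perm (Fin n))
    (hsLne : ∀ i, sL i ≠ i) (hsLinv : ∀ i, sL (sL i) = i)
    (hsRne : ∀ i, sR i ≠ i) (hsRinv : ∀ i, sR (sR i) = i)
    (hvisit : ∀ i : Fin n, ∃ m, pathSeq sL sR m = i)
    (Br : AM n sL sR → AM n sL sR → AM n sL sR)
    (hBr : IsSFTBracket sL sR Br) :
    ∀ x y z : AM n sL sR, Br x (Br y z) + Br y (Br z x) + Br z (Br x y) = 0 :=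
  middle_bracket_jacobi_general sL sR Br hBr
end

section
/- The SFT differential on the middle algebra is given by bracketing with the Hamiltonian: for all x ∈ A^M, d^M_SFT(x) = {h^M, x}. -/
open MvPolynomial

/-! Both sides are derivations of `A^M` in `x`: the bracket `{h^M, ·}` satisfies the Leibniz
rule, and being additive it is automatically `𝔽₂`-linear. So it suffices to compare them on a
generator `g`, where `{g, h^M} = Σ_{i<j} ({g, α^L_{ij}} α^R_{ij} + α^L_{ij} {g, α^R_{ij}})`.
The bracket of `g` with `α_{ij}` is nonzero only when `ij` continues the index pair `pq` of `g`
(`i = q` or `j = p`, for `g = α_{pq}`) or shares exactly one endpoint with it (for `g = β_{pq}`);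
collapsing the double sum along these incidences leaves exactly the summands of `d^M_SFT(g)`. -/

theorem ite_lt_concat_eq_add {α M : Type*} [LinearOrder α] [AddMonoid M] {p q : α} (hpq : p < q)
    (i j : α) (a b : M) :
    (if i < j then (if q = i then a else if p = j then b else 0) else 0)
      = (if i = q ∧ q < j then a else 0) + (if j = p ∧ i < p then b else 0) := by
  split_ifs <;> first | (simp only [add_zero, zero_add]; done) | (exfalso; grind)

theorem ite_lt_xor_eq_add {α M : Type*} [LinearOrder α] [AddMonoid M] {p q : α} (hpq : p < q)
    (i j : α) (a : M) :
    (if i < j then (if Xor (i = p ∨ i = q) (j = p ∨ j = q) then a else 0) else 0)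
      = (if j = p ∧ i < p then a else 0) + (if i = p ∧ (p < j ∧ j ≠ q) then a else 0)
        + (if j = q ∧ (i < q ∧ i ≠ p) then a else 0)
        + (if i = q ∧ q < j then a else 0) := by
  split_ifs <;> first | (simp only [add_zero, zero_add]; done) | (exfalso; grind)

theorem Finset.sum_sum_ite_eq_and_left {α M : Type*} [Fintype α] [DecidableEq α]
    [AddCommMonoid M] (c : α) (P : α → Prop) [DecidablePred P] (f : α → α → M) :
    (∑ i, ∑ j, if i = c ∧ P j then f i j else 0) = ∑ j, if P j then f c j else 0 := by
  simp [ite_and, Finset.sum_ite_irrel]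

theorem Finset.sum_sum_ite_eq_and_right {α M : Type*} [Fintype α] [DecidableEq α]
    [AddCommMonoid M] (c : α) (P : α → Prop) [DecidablePred P] (f : α → α → M) :
    (∑ i, ∑ j, if j = c ∧ P i then f i j else 0) = ∑ i, if P i then f i c else 0 := by
  rw [Finset.sum_comm]
  exact Finset.sum_sum_ite_eq_and_left c P fun j i => f i j

def AddMonoidHom.toZModDerivation (p : ℕ) {A : Type*} [CommRing A] [Algebra (ZMod p) A]
    (f : A →+ A) (h : ∀ a b, f (a * b) = f a * b + a * f b) : Derivation (ZMod p) A A :=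
  Derivation.mk' (f.toZModLinearMap p) fun a b => by
    simp only [AddMonoidHom.coe_toZModLinearMap, h, smul_eq_mul]
    ring

section

variable {n : ℕ} {sL sR : Equiv.Perm (Fin n)}

theorem hamM_eq_sum : hamM sL sR = ∑ i, ∑ j, genAL sL sR i j * genAR sL sR i j := by
  refine Finset.sum_congr rfl fun i _ => Finset.sum_congr rfl fun j _ => ?_
  split_ifs with h
  · rfl
  · simp [genAL, h]

namespace IsSFTBracket

variable {Br : AM n sL sR → AM n sL sR → AM n sL sR}

noncomputable def derivation (hBr : IsSFTBracket sL sR Br) (x : AM n sL sR) :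
    Derivation (ZMod 2) (AM n sL sR) (AM n sL sR) :=
  (AddMonoidHom.mk' (Br x) (hBr.2.1 x)).toZModDerivation 2 (hBr.2.2.1 x)

theorem derivation_apply (hBr : IsSFTBracket sL sR Br) (x y : AM n sL sR) :
    hBr.derivation x y = Br x y := rfl

theorem X_genAL (hBr : IsSFTBracket sL sR Br) (g : MGen n sL sR) (i j : Fin n) :
    Br (X g) (genAL sL sR i j) = if h : i < j then mBrVal sL sR g ⟨.aL i j, h⟩ else 0 := by
  unfold genAL
  split_ifs with h
  · exact hBr.2.2.2 _ _
  · exact (hBr.derivation _).map_zero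

theorem X_genAR (hBr : IsSFTBracket sL sR Br) (g : MGen n sL sR) (i j : Fin n) :
    Br (X g) (genAR sL sR i j) = if h : i < j then mBrVal sL sR g ⟨.aR i j, h⟩ else 0 := by
  unfold genAR
  split_ifs with h
  · exact hBr.2.2.2 _ _
  · exact (hBr.derivation _).map_zero

theorem X_hamM_eq_sum (hBr : IsSFTBracket sL sR Br) (g : MGen n sL sR) :
    Br (X g) (hamM sL sR) = ∑ i, ∑ j,
      (Br (X g) (genAL sL sR i j) * genAR sL sR i j
        + genAL sL sR i j * Br (X g) (genAR sL sR i j)) := by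
  simp only [← hBr.derivation_apply, hamM_eq_sum, map_sum, Derivation.leibniz, smul_eq_mul]
  refine Finset.sum_congr rfl fun i _ => Finset.sum_congr rfl fun j _ => ?_
  ring

theorem X_aL_hamM (hBr : IsSFTBracket sL sR Br) {p q : Fin n} (h : MGenValid sL sR (.aL p q)) :
    Br (X ⟨.aL p q, h⟩) (hamM sL sR) = dSFTVal sL sR ⟨.aL p q, h⟩ := by
  have hL : ∀ i j, Br (X ⟨.aL p q, h⟩) (genAL sL sR i j)
      = (if i = q ∧ q < j then genAL sL sR p j else 0)
        + (if j = p ∧ i < p then genAL sL sR i q else 0) := fun i j =>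
    (hBr.X_genAL _ i j).trans (ite_lt_concat_eq_add h i j _ _)
  have hR : ∀ i j, Br (X ⟨.aL p q, h⟩) (genAR sL sR i j) = 0 := fun i j =>
    (hBr.X_genAR _ i j).trans (dite_eq_right_iff.2 fun _ => rfl)
  refine (hBr.X_hamM_eq_sum _).trans ?_
  simp only [hL, hR, mul_zero, add_zero, add_mul, ite_mul, zero_mul,
    Finset.sum_add_distrib, Finset.sum_sum_ite_eq_and_left, Finset.sum_sum_ite_eq_and_right]
  rfl

theorem X_aR_hamM (hBr : IsSFTBracket sL sR Br) {p q : Fin n} (h : MGenValid sL sR (.aR p q)) :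
    Br (X ⟨.aR p q, h⟩) (hamM sL sR) = dSFTVal sL sR ⟨.aR p q, h⟩ := by
  have hL : ∀ i j, Br (X ⟨.aR p q, h⟩) (genAL sL sR i j) = 0 := fun i j =>
    (hBr.X_genAL _ i j).trans (dite_eq_right_iff.2 fun _ => rfl)
  have hR : ∀ i j, Br (X ⟨.aR p q, h⟩) (genAR sL sR i j)
      = (if i = q ∧ q < j then genAR sL sR p j else 0)
        + (if j = p ∧ i < p then genAR sL sR i q else 0) := fun i j =>
    (hBr.X_genAR _ i j).trans (ite_lt_concat_eq_add h i j _ _)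
  refine (hBr.X_hamM_eq_sum _).trans ?_
  simp only [hL, hR, zero_mul, zero_add, mul_add, mul_ite, mul_zero,
    Finset.sum_add_distrib, Finset.sum_sum_ite_eq_and_left, Finset.sum_sum_ite_eq_and_right]
  simp only [dSFTVal, mul_comm]

theorem X_bL_hamM (hBr : IsSFTBracket sL sR Br) {p q : Fin n} (h : MGenValid sL sR (.bL p q)) :
    Br (X ⟨.bL p q, h⟩) (hamM sL sR) = dSFTVal sL sR ⟨.bL p q, h⟩ := by
  have hL : ∀ i j, Br (X ⟨.bL p q, h⟩) (genAL sL sR i j)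
      = (if j = p ∧ i < p then genAL sL sR i j else 0)
        + (if i = p ∧ (p < j ∧ j ≠ q) then genAL sL sR i j else 0)
        + (if j = q ∧ (i < q ∧ i ≠ p) then genAL sL sR i j else 0)
        + (if i = q ∧ q < j then genAL sL sR i j else 0) := fun i j =>
    (hBr.X_genAL _ i j).trans (ite_lt_xor_eq_add h.1 i j _)
  have hR : ∀ i j, Br (X ⟨.bL p q, h⟩) (genAR sL sR i j) = 0 := fun i j =>
    (hBr.X_genAR _ i j).trans (dite_eq_right_iff.2 fun _ => rfl)
  refine (hBr.X_hamM_eq_sum _).trans ?_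
  simp only [hL, hR, mul_zero, add_zero, add_mul, ite_mul, zero_mul,
    Finset.sum_add_distrib, Finset.sum_sum_ite_eq_and_left, Finset.sum_sum_ite_eq_and_right]
  rfl

theorem X_bR_hamM (hBr : IsSFTBracket sL sR Br) {p q : Fin n} (h : MGenValid sL sR (.bR p q)) :
    Br (X ⟨.bR p q, h⟩) (hamM sL sR) = dSFTVal sL sR ⟨.bR p q, h⟩ := by
  have hL : ∀ i j, Br (X ⟨.bR p q, h⟩) (genAL sL sR i j) = 0 := fun i j =>
    (hBr.X_genAL _ i j).trans (dite_eq_right_iff.2 fun _ => rfl)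
  have hR : ∀ i j, Br (X ⟨.bR p q, h⟩) (genAR sL sR i j)
      = (if j = p ∧ i < p then genAR sL sR i j else 0)
        + (if i = p ∧ (p < j ∧ j ≠ q) then genAR sL sR i j else 0)
        + (if j = q ∧ (i < q ∧ i ≠ p) then genAR sL sR i j else 0)
        + (if i = q ∧ q < j then genAR sL sR i j else 0) := fun i j =>
    (hBr.X_genAR _ i j).trans (ite_lt_xor_eq_add h.1 i j _)
  refine (hBr.X_hamM_eq_sum _).trans ?_
  simp only [hL, hR, zero_mul, zero_add, mul_add, mul_ite, mul_zero,
    Finset.sum_add_distrib, Finset.sum_sum_ite_eq_and_left, Finset.sum_sum_ite_eq_and_right]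
  rfl

theorem hamM_X (hBr : IsSFTBracket sL sR Br) (g : MGen n sL sR) :
    Br (hamM sL sR) (X g) = dSFTVal sL sR g := by
  rw [hBr.1]
  obtain ⟨_ | _ | _ | _, h⟩ := g
  exacts [hBr.X_aL_hamM h, hBr.X_aR_hamM h, hBr.X_bL_hamM h, hBr.X_bR_hamM h]

end IsSFTBracket

end

theorem middle_dSFT_eq_bracket_ham_general {n : ℕ} (sL sR : Equiv.Perm (Fin n))
    (Dsft : Derivation (ZMod 2) (AM n sL sR) (AM n sL sR))
    (hDsft : ∀ g : MGen n sL sR, Dsft (X g) = dSFTVal sL sR g)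
    (Br : AM n sL sR → AM n sL sR → AM n sL sR)
    (hBr : IsSFTBracket sL sR Br) :
    ∀ x : AM n sL sR, Dsft x = Br (hamM sL sR) x := by
  have h : Dsft = hBr.derivation (hamM sL sR) :=
    MvPolynomial.derivation_ext fun g => (hDsft g).trans (hBr.hamM_X g).symm
  exact DFunLike.congr_fun h

/-- The SFT differential on the middle algebra is bracketing with `h^M`. -/
theorem middle_dSFT_eq_bracket_ham {n : ℕ} [NeZero n] (hn2 : 2 ≤ n) (hnEven : Even n)
    (sL sR : Equiv.Perm (Fin n))
    (hsLne : ∀ i, sL i ≠ i) (hsLinv : ∀ i, sL (sL i) = i)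
    (hsRne : ∀ i, sR i ≠ i) (hsRinv : ∀ i, sR (sR i) = i)
    (hvisit : ∀ i : Fin n, ∃ m, pathSeq sL sR m = i)
    (Dsft : Derivation (ZMod 2) (AM n sL sR) (AM n sL sR))
    (hDsft : ∀ g : MGen n sL sR, Dsft (X g) = dSFTVal sL sR g)
    (Br : AM n sL sR → AM n sL sR → AM n sL sR)
    (hBr : IsSFTBracket sL sR Br) :
    ∀ x : AM n sL sR, Dsft x = Br (hamM sL sR) x :=
  middle_dSFT_eq_bracket_ham_general sL sR Dsft hDsft Br hBr
end

section
/- The string differential on the middle algebra is a derivation of the SFT bracket: for all x, y ∈ A^M, δ^M_str({x, y}) = {δ^M_str(x), y} + {x, δ^M_str(y)}. -/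
open MvPolynomial

/-!
For fixed `x`, the defect `y ↦ δ{x, y} - {δx, y} - {x, δy}` is again a derivation, and it is
symmetric in `x` and `y`; so it suffices that it vanishes on pairs of generators.

Bracketing with a β-generator, and hence with every `γ_a`, acts diagonally on the α-generators:
`{γ_a, α^x_{kl}} = (w(a, k) + w(a, l)) α^x_{kl}`, where `w(a, b) ∈ 𝔽₂` records whether the
`x`-step of the path through `b` comes before the first visit of `a`. As the path visits every
point exactly once in its first `n` steps, `w(a, b) + w(b, a) = 1 + [a = b]` up to terms attached
to the starting point, which cancel in pairs. Consequently, on two α-generators of the same side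
the γ-part of `δ^M_str` supplies exactly the terms by which the quadratic part
`Σ_{i<m<j} α^x_{im} α^x_{mj}` fails to be a derivation of the bracket, and on generators of
opposite sides its contributions cancel.
-/

open Finset

section Biderivation

variable {A : Type*} [CommRing A]

structure IsSymmBiderivation (Br : A → A → A) : Prop where
  symm : ∀ x y, Br x y = Br y x
  map_add : ∀ x y z, Br x (y + z) = Br x y + Br x z
  map_mul : ∀ x y z, Br x (y * z) = Br x y * z + y * Br x z

def IsBracketDerivationAt (D : A → A) (Br : A → A → A) (x y : A) : Prop :=
  D (Br x y) = Br (D x) y + Br x (D y)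

namespace IsSymmBiderivation

variable {Br : A → A → A} (hBr : IsSymmBiderivation Br)
include hBr

lemma add_left (x y z : A) : Br (x + y) z = Br x z + Br y z := by
  rw [hBr.symm, hBr.map_add, hBr.symm z, hBr.symm z]

lemma mul_left (x y z : A) : Br (x * y) z = Br x z * y + x * Br y z := by
  rw [hBr.symm, hBr.map_mul, hBr.symm z, hBr.symm z]

lemma map_zero (x : A) : Br x 0 = 0 := by
  simpa using hBr.map_add x 0 0

lemma map_one (x : A) : Br x 1 = 0 := by
  simpa using hBr.map_mul x 1 1

lemma map_sum {ι : Type*} (x : A) (s : Finset ι) (f : ι → A) :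
    Br x (∑ t ∈ s, f t) = ∑ t ∈ s, Br x (f t) :=
  _root_.map_sum (AddMonoidHom.mk' (Br x) (hBr.map_add x)) f s

lemma sum_left {ι : Type*} (s : Finset ι) (f : ι → A) (z : A) :
    Br (∑ t ∈ s, f t) z = ∑ t ∈ s, Br (f t) z := by
  simp only [hBr.symm _ z, hBr.map_sum]

lemma map_mul_self [CharP A 2] (x y : A) : Br x (y * y) = 0 := by
  rw [hBr.map_mul, mul_comm (Br x y), CharTwo.add_self_eq_zero]

end IsSymmBiderivation

lemma IsBracketDerivationAt.symm {D : A → A} {Br : A → A → A} (hBr : IsSymmBiderivation Br)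
    {x y : A} (h : IsBracketDerivationAt D Br x y) : IsBracketDerivationAt D Br y x := by
  unfold IsBracketDerivationAt at *
  rw [hBr.symm, h, add_comm, hBr.symm (D x), hBr.symm x]

end Biderivation

namespace MvPolynomial

variable {R σ : Type*} [CommRing R]

lemma eq_zero_of_leibniz (f : MvPolynomial σ R → MvPolynomial σ R) (hC : ∀ a, f (C a) = 0)
    (hadd : ∀ p q, f (p + q) = f p + f q) (hmul : ∀ p q, f (p * q) = f p * q + p * f q)
    (hX : ∀ g, f (X g) = 0) (p : MvPolynomial σ R) : f p = 0 := by
  induction p using MvPolynomial.induction_on with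
  | C a => exact hC a
  | add p q hp hq => rw [hadd, hp, hq, add_zero]
  | mul_X p g hp => rw [hmul, hp, hX, zero_mul, mul_zero, add_zero]

theorem isBracketDerivationAt_of_X (D : Derivation R (MvPolynomial σ R) (MvPolynomial σ R))
    {Br : MvPolynomial σ R → MvPolynomial σ R → MvPolynomial σ R} (hBr : IsSymmBiderivation Br)
    (hC : ∀ x a, Br x (C a) = 0) (hX : ∀ g g', IsBracketDerivationAt D Br (X g) (X g'))
    (x y : MvPolynomial σ R) : IsBracketDerivationAt D Br x y := by
  set F : MvPolynomial σ R → MvPolynomial σ R → MvPolynomial σ R :=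
    fun x y => D (Br x y) - Br (D x) y - Br x (D y) with hF
  have hF_symm : ∀ x y, F x y = F y x := by
    intro x y
    simp only [hF, hBr.symm x y, hBr.symm (D x), hBr.symm x (D y)]
    ring
  -- `F x` obeys the Leibniz rule: the cross terms `{x, y} Dz` and `Dy {x, z}` cancel.
  have hF_eq_zero : ∀ x, (∀ g, F x (X g) = 0) → ∀ y, F x y = 0 := by
    intro x hx
    refine eq_zero_of_leibniz (F x) (fun a => ?_) (fun p q => ?_) (fun p q => ?_) hx
    · simp only [hF, hC, derivation_C, hBr.map_zero, map_zero, sub_zero]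
    · simp only [hF, hBr.map_add, map_add]
      ring
    · simp only [hF, hBr.map_mul, hBr.map_add, map_add, Derivation.leibniz, smul_eq_mul]
      ring
  have hF_X : ∀ g y, F (X g) y = 0 := fun g => hF_eq_zero _ fun g' => by
    simp only [hF]
    rw [sub_sub]
    exact sub_eq_zero.2 (hX g g')
  have : F x y = 0 := by
    rw [hF_symm]
    exact hF_eq_zero y (fun g => by rw [hF_symm]; exact hF_X g y) x
  unfold IsBracketDerivationAt
  rw [← sub_eq_zero, ← sub_sub]
  exact this

end MvPolynomial

lemma sum_Ioo_eq_sum_Ioo_add_add_sum_Ioo {α M : Type*} [LinearOrder α] [LocallyFiniteOrder α]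
    [AddCommMonoid M] {i j l : α} (hij : i < j) (hjl : j < l) (f : α → M) :
    ∑ m ∈ Ioo i l, f m = ∑ m ∈ Ioo i j, f m + f j + ∑ m ∈ Ioo j l, f m := by
  have hunion : Ioc i j ∪ Ioo j l = Ioo i l := by
    rw [← coe_inj]
    push_cast
    exact Set.Ioc_union_Ioo_eq_Ioo hij.le hjl
  have hdisj : Disjoint (Ioc i j) (Ioo j l) :=
    disjoint_left.2 fun m h1 h2 => (mem_Ioc.1 h1).2.not_gt (mem_Ioo.1 h2).1
  rw [← hunion, sum_union hdisj, ← Ioo_insert_right hij, sum_insert right_notMem_Ioo,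
    add_comm (f j)]

lemma ite_xor_eq_smul {α M : Type*} [DecidableEq α] [AddCommGroup M] [Module (ZMod 2) M]
    {k l : α} (hkl : k ≠ l) (i j : α) (v : M) :
    (if Xor (i = k ∨ i = l) (j = k ∨ j = l) then v else 0)
      = (((if i = k then 1 else 0) + (if i = l then 1 else 0))
        + ((if j = k then 1 else 0) + (if j = l then (1 : ZMod 2) else 0))) • v := by
  by_cases h1 : i = k <;> by_cases h2 : i = l <;> by_cases h3 : j = k <;> by_cases h4 : j = l <;>
    simp_all [Xor, show (1 + 1 : ZMod 2) = 0 from rfl]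

lemma ite_Ioo_add_ite_Ioo {n : ℕ} {i j k l : Fin n} (hij : i < j) (hkl : k < l) :
    (if k ∈ Ioo i j then (1 : ZMod 2) else 0) + (if l ∈ Ioo i j then 1 else 0)
      + ((if i ∈ Ioo k l then 1 else 0) + (if j ∈ Ioo k l then 1 else 0))
      = (if i = k then 1 else 0) + (if j = l then 1 else 0) := by
  simp only [mem_Ioo]
  split_ifs <;> first | decide | omega

inductive Side
  | L
  | R
  deriving DecidableEq

def Side.perm {n : ℕ} (sL sR : Equiv.Perm (Fin n)) : Side → Equiv.Perm (Fin n)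
  | .L => sL
  | .R => sR

def stepSide (t : ℕ) : Side := if t % 2 = 0 then .R else .L

lemma stepSide_eq_R {t : ℕ} : stepSide t = .R ↔ t % 2 = 0 := by
  unfold stepSide; split_ifs <;> simp_all

lemma stepSide_eq_L {t : ℕ} : stepSide t = .L ↔ t % 2 = 1 := by
  unfold stepSide; split_ifs <;> simp_all

lemma stepSide_add_of_even {t p : ℕ} (hp : Even p) : stepSide (t + p) = stepSide t := by
  obtain ⟨q, rfl⟩ := hp
  simp only [stepSide, show (t + (q + q)) % 2 = t % 2 by omega]

section Path

variable {n : ℕ} [NeZero n] {sL sR : Equiv.Perm (Fin n)}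

lemma pathSeq_succ (t : ℕ) :
    pathSeq sL sR (t + 1) = (stepSide t).perm sL sR (pathSeq sL sR t) := by
  rw [pathSeq, stepSide]
  split_ifs <;> rfl

lemma pathSeq_eq_perm_succ (hinv : ∀ x : Side, Function.Involutive (x.perm sL sR)) (t : ℕ) :
    pathSeq sL sR t = (stepSide t).perm sL sR (pathSeq sL sR (t + 1)) := by
  rw [pathSeq_succ, hinv]

lemma pathSeq_periodic (hinv : ∀ x : Side, Function.Involutive (x.perm sL sR)) {a p : ℕ}
    (hp : Even p) (h : pathSeq sL sR a = pathSeq sL sR (a + p)) :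
    Function.Periodic (pathSeq sL sR) p := by
  -- Steps can be undone, so the coincidence at time `a` propagates back to time `0`.
  have h0 : pathSeq sL sR 0 = pathSeq sL sR p := by
    induction a with
    | zero => simpa using h
    | succ a ih =>
      apply ih
      rw [pathSeq_eq_perm_succ hinv a, pathSeq_eq_perm_succ hinv (a + p),
        show a + p + 1 = a + 1 + p by ring, ← h, stepSide_add_of_even hp]
  intro m
  induction m with
  | zero => simpa using h0.symm
  | succ m ih =>
    rw [show m + 1 + p = m + p + 1 by ring, pathSeq_succ, pathSeq_succ, ih,
      stepSide_add_of_even hp]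

lemma le_of_pathSeq_periodic (hvisit : ∀ i : Fin n, ∃ m, pathSeq sL sR m = i) {p : ℕ}
    (hper : Function.Periodic (pathSeq sL sR) p) (hp : 0 < p) : n ≤ p := by
  have hsurj : Function.Surjective fun t : Fin p => pathSeq sL sR t := by
    intro a
    obtain ⟨m, rfl⟩ := hvisit a
    exact ⟨⟨m % p, Nat.mod_lt m hp⟩, hper.map_mod_nat m⟩
  simpa using Fintype.card_le_of_surjective _ hsurj

-- Folding the two ends towards each other would produce a fixed point of `sL` or `sR`.
lemma pathSeq_add_odd_ne (hne : ∀ (x : Side) a, x.perm sL sR a ≠ a)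
    (hinv : ∀ x : Side, Function.Involutive (x.perm sL sR)) (d a : ℕ) :
    pathSeq sL sR (a + (2 * d + 1)) ≠ pathSeq sL sR a := by
  induction d generalizing a with
  | zero => simpa [pathSeq_succ] using hne _ _
  | succ d ih =>
    intro h
    apply ih (a + 1)
    rw [show a + (2 * (d + 1) + 1) = a + 1 + (2 * d + 1) + 1 by ring] at h
    rw [pathSeq_eq_perm_succ hinv, h, pathSeq_succ,
      show a + 1 + (2 * d + 1) = a + 2 * (d + 1) by ring, stepSide_add_of_even (even_two_mul _)]

lemma pathSeq_injOn (hvisit : ∀ i : Fin n, ∃ m, pathSeq sL sR m = i)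
    (hne : ∀ (x : Side) a, x.perm sL sR a ≠ a)
    (hinv : ∀ x : Side, Function.Involutive (x.perm sL sR)) :
    Set.InjOn (pathSeq sL sR) (Set.Iio n) := by
  have hlt : ∀ a b, a < b → b < n → pathSeq sL sR a ≠ pathSeq sL sR b := by
    intro a b hab hb h
    obtain ⟨p, rfl⟩ := Nat.exists_eq_add_of_lt hab
    rcases Nat.even_or_odd (p + 1) with hp | ⟨d, hd⟩
    · have := le_of_pathSeq_periodic hvisit (pathSeq_periodic hinv hp h) (by omega)
      omega
    · exact pathSeq_add_odd_ne hne hinv d a (by rw [← hd, ← add_assoc]; exact h.symm)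
  intro a ha b hb h
  rcases lt_trichotomy a b with hab | hab | hab
  exacts [absurd h (hlt a b hab hb), hab, absurd h.symm (hlt b a hab ha)]

noncomputable def visitTime (hvisit : ∀ i : Fin n, ∃ m, pathSeq sL sR m = i) (a : Fin n) : ℕ :=
  Nat.find (hvisit a)

variable (hvisit : ∀ i : Fin n, ∃ m, pathSeq sL sR m = i)

lemma pathSeq_visitTime (a : Fin n) : pathSeq sL sR (visitTime hvisit a) = a :=
  Nat.find_spec (hvisit a)

lemma visitTime_injective : Function.Injective (visitTime hvisit) :=
  Function.LeftInverse.injective (pathSeq_visitTime hvisit)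

lemma visitTime_eq_zero_iff {a : Fin n} : visitTime hvisit a = 0 ↔ a = 0 := by
  rw [visitTime, Nat.find_eq_zero]
  exact eq_comm

variable (hne : ∀ (x : Side) a, x.perm sL sR a ≠ a)
  (hinv : ∀ x : Side, Function.Involutive (x.perm sL sR))
include hne hinv

lemma visitTime_lt (a : Fin n) : visitTime hvisit a < n := by
  have hinj : Function.Injective fun t : Fin n => pathSeq sL sR t := fun s t h =>
    Fin.ext (pathSeq_injOn hvisit hne hinv s.isLt t.isLt h)
  obtain ⟨t, ht⟩ := Finite.injective_iff_surjective.1 hinj a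
  exact (Nat.find_min' _ ht).trans_lt t.isLt

lemma eq_pathSeq_iff {t : ℕ} (ht : t < n) {b : Fin n} :
    b = pathSeq sL sR t ↔ visitTime hvisit b = t := by
  refine ⟨fun h => pathSeq_injOn hvisit hne hinv (visitTime_lt hvisit hne hinv b) ht ?_,
    fun h => h ▸ (pathSeq_visitTime hvisit b).symm⟩
  rw [pathSeq_visitTime, h]

end Path

/-- The index of the `x`-step of the closed path `pathSeq 0, …, pathSeq (n - 1), pathSeq 0`
through position `s`. The `L`-step through position `0` is the closing step; it gets the index
`n`, beyond every visit time. -/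
def sideStep (n : ℕ) (x : Side) (s : ℕ) : ℕ :=
  if stepSide s = x then s else if s = 0 then n else s - 1

lemma ite_stepSide_eq {n t : ℕ} (ht : t < n) (x : Side) (s : ℕ) :
    (if x = stepSide t then (if s = t then (1 : ZMod 2) else 0) + (if s = t + 1 then 1 else 0)
      else 0) = if t = sideStep n x s then 1 else 0 := by
  cases x <;> simp only [sideStep, eq_comm (a := Side.L), eq_comm (a := Side.R), stepSide_eq_L,
    stepSide_eq_R] <;> split_ifs <;> first | decide | omega

lemma sum_ite_stepSide {n S : ℕ} (hS : S ≤ n) (x : Side) (s : ℕ) :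
    ∑ t ∈ range S, (if x = stepSide t then
      (if s = t then (1 : ZMod 2) else 0) + (if s = t + 1 then 1 else 0) else 0)
      = if sideStep n x s < S then 1 else 0 := by
  rw [sum_congr rfl fun t ht => ite_stepSide_eq ((mem_range.1 ht).trans_le hS) x s,
    sum_ite_eq', if_congr mem_range rfl rfl]

lemma sideStep_lt_add_sideStep_lt {n s t : ℕ} (hs : s < n) (ht : t < n) (x : Side) :
    (if sideStep n x t < s then (1 : ZMod 2) else 0) + (if sideStep n x s < t then 1 else 0)
      = 1 + (if s = t then 1 else 0) + (if x = .L ∧ s = 0 then 1 else 0)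
        + (if x = .L ∧ t = 0 then 1 else 0) := by
  cases x <;> simp only [sideStep, stepSide_eq_L, stepSide_eq_R, reduceCtorEq, true_and,
    false_and] <;> split_ifs <;> first | decide | omega

lemma sideStep_R_lt_add_sideStep_L_lt {n s t : ℕ} (ht : t < n) :
    (if sideStep n .R t < s then (1 : ZMod 2) else 0) + (if sideStep n .L s < t then 1 else 0)
      = 1 + if s = 0 then 1 else 0 := by
  simp only [sideStep, stepSide_eq_L, stepSide_eq_R]
  split_ifs <;> first | decide | omega

section Generators

variable {n : ℕ} {sL sR : Equiv.Perm (Fin n)}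

noncomputable def genA : Side → Fin n → Fin n → AM n sL sR
  | .L => genAL sL sR
  | .R => genAR sL sR

noncomputable def genB : Side → Fin n → Fin n → AM n sL sR
  | .L => genBL sL sR
  | .R => genBR sL sR

noncomputable def quadA (x : Side) (i j : Fin n) : AM n sL sR :=
  ∑ m ∈ Ioo i j, genA x i m * genA x m j

lemma genA_of_not_lt {x : Side} {i j : Fin n} (h : ¬i < j) : (genA x i j : AM n sL sR) = 0 := by
  cases x <;> exact dif_neg h

lemma genB_of_not_valid {x : Side} {i j : Fin n} (h : ¬(i < j ∧ x.perm sL sR i = j)) :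
    (genB x i j : AM n sL sR) = 0 := by
  cases x <;> exact dif_neg h

lemma X_eq_genA_or_genB (g : MGen n sL sR) :
    (∃ x i j, i < j ∧ X g = genA x i j) ∨
      ∃ x i j, i < j ∧ x.perm sL sR i = j ∧ X g = genB x i j := by
  obtain ⟨⟨i, j⟩ | ⟨i, j⟩ | ⟨i, j⟩ | ⟨i, j⟩, hg⟩ := g
  · exact .inl ⟨.L, i, j, hg, by rw [genA, genAL, dif_pos (show i < j from hg)]⟩
  · exact .inl ⟨.R, i, j, hg, by rw [genA, genAR, dif_pos (show i < j from hg)]⟩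
  · have hv : i < j ∧ sL i = j := hg
    exact .inr ⟨.L, i, j, hv.1, hv.2, by rw [genB, genBL, dif_pos hv]⟩
  · have hv : i < j ∧ sR i = j := hg
    exact .inr ⟨.R, i, j, hv.1, hv.2, by rw [genB, genBR, dif_pos hv]⟩

lemma ite_add_ite_smul_genA_mul_genA (x : Side) (i j k l : Fin n) :
    ((if i = k then 1 else 0) + (if j = l then 1 else 0) : ZMod 2)
        • (genA x i l * genA x k j : AM n sL sR)
      = ((if i = k then 1 else 0) + (if j = l then 1 else 0) : ZMod 2)
        • (genA x i j * genA x k l) := by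
  by_cases hik : i = k
  · subst hik
    rw [mul_comm]
  by_cases hjl : j = l
  · subst hjl
    rfl
  simp [hik, hjl]

end Generators

structure IsGradingOp {n : ℕ} {sL sR : Equiv.Perm (Fin n)} (E : AM n sL sR → AM n sL sR)
    (w : Side → Fin n → ZMod 2) : Prop where
  map_genA : ∀ x i j, E (genA x i j) = (w x i + w x j) • genA x i j
  map_genB : ∀ x i j, E (genB x i j) = 0

namespace IsSFTBracket

variable {n : ℕ} {sL sR : Equiv.Perm (Fin n)} {Br : AM n sL sR → AM n sL sR → AM n sL sR}
  (hBr : IsSFTBracket sL sR Br)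
include hBr

lemma isSymmBiderivation : IsSymmBiderivation Br := ⟨hBr.1, hBr.2.1, hBr.2.2.1⟩

lemma map_C (x : AM n sL sR) (a : ZMod 2) : Br x (C a) = 0 := by
  obtain rfl | rfl : a = 0 ∨ a = 1 := by revert a; decide
  · simpa using hBr.isSymmBiderivation.map_zero x
  · simpa using hBr.isSymmBiderivation.map_one x

lemma genA_genA {x : Side} {i j k l : Fin n} (hij : i < j) (hkl : k < l) :
    Br (genA x i j) (genA x k l)
      = (if j = k then genA x i l else 0) + (if i = l then genA x k j else 0) := by
  have h : Br (genA x i j) (genA x k l)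
      = if j = k then genA x i l else if i = l then genA x k j else 0 := by
    cases x
    exacts [(congrArg₂ Br (dif_pos hij) (dif_pos hkl)).trans (hBr.2.2.2 _ _),
      (congrArg₂ Br (dif_pos hij) (dif_pos hkl)).trans (hBr.2.2.2 _ _)]
  rw [h]
  split_ifs <;> first | (exfalso; omega) | simp

lemma genA_genA_of_ne {x y : Side} (hxy : x ≠ y) (i j k l : Fin n) :
    Br (genA x i j) (genA y k l) = 0 := by
  by_cases hij : i < j
  · by_cases hkl : k < l
    · cases x <;> cases y <;> first | exact absurd rfl hxy |
        exact (congrArg₂ Br (dif_pos hij) (dif_pos hkl)).trans (hBr.2.2.2 _ _)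
    · rw [genA_of_not_lt hkl, hBr.isSymmBiderivation.map_zero]
  · rw [genA_of_not_lt hij, hBr.isSymmBiderivation.symm, hBr.isSymmBiderivation.map_zero]

lemma genB_genB (x y : Side) (i j k l : Fin n) : Br (genB x i j) (genB y k l) = 0 := by
  by_cases hij : i < j ∧ x.perm sL sR i = j
  · by_cases hkl : k < l ∧ y.perm sL sR k = l
    · cases x <;> cases y <;>
        exact (congrArg₂ Br (dif_pos hij) (dif_pos hkl)).trans (hBr.2.2.2 _ _)
    · rw [genB_of_not_valid hkl, hBr.isSymmBiderivation.map_zero]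
  · rw [genB_of_not_valid hij, hBr.isSymmBiderivation.symm, hBr.isSymmBiderivation.map_zero]

lemma isGradingOp_genB {y : Side} {k l : Fin n} (hkl : k < l) (hperm : y.perm sL sR k = l) :
    IsGradingOp (Br (genB y k l))
      (fun x b => if x = y then (if b = k then 1 else 0) + (if b = l then 1 else 0) else 0) where
  map_genA x i j := by
    by_cases hij : i < j
    · have h : Br (genB y k l) (genA x i j)
          = if x = y then (if Xor (i = k ∨ i = l) (j = k ∨ j = l) then genA x i j else 0)
            else 0 := by
        cases x <;> cases y <;>
          exact (congrArg₂ Br (dif_pos ⟨hkl, hperm⟩) (dif_pos hij)).trans (hBr.2.2.2 _ _)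
      rw [h, ite_xor_eq_smul hkl.ne]
      split_ifs <;> simp
    · simp [genA_of_not_lt hij, hBr.isSymmBiderivation.map_zero]
  map_genB x i j := hBr.genB_genB y x k l i j

lemma quadA_genA (x : Side) (i j : Fin n) {k l : Fin n} (hkl : k < l) :
    Br (quadA x i j) (genA x k l)
      = ((if k ∈ Ioo i j then 1 else 0) + (if l ∈ Ioo i j then 1 else 0) : ZMod 2)
          • (genA x i l * genA x k j)
        + (if i = l then ∑ m ∈ Ioo i j, genA x k m * genA x m j else 0)
        + (if j = k then ∑ m ∈ Ioo i j, genA x i m * genA x m l else 0) := by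
  rw [quadA, hBr.isSymmBiderivation.sum_left]
  rw [sum_congr rfl fun m hm => by
    rw [hBr.isSymmBiderivation.mul_left, hBr.genA_genA (mem_Ioo.1 hm).1 hkl,
      hBr.genA_genA (mem_Ioo.1 hm).2 hkl]]
  simp only [add_mul, mul_add, ite_mul, mul_ite, zero_mul, mul_zero, sum_add_distrib,
    sum_ite_eq', sum_ite_irrel, sum_const_zero, add_smul, ite_smul, one_smul, zero_smul]
  abel

end IsSFTBracket

namespace IsGradingOp

variable {n : ℕ} {sL sR : Equiv.Perm (Fin n)} {Br : AM n sL sR → AM n sL sR → AM n sL sR}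
  (hBr : IsSymmBiderivation Br)
include hBr

lemma add {y z : AM n sL sR} {w v : Side → Fin n → ZMod 2} (hy : IsGradingOp (Br y) w)
    (hz : IsGradingOp (Br z) v) : IsGradingOp (Br (y + z)) (w + v) where
  map_genA x i j := by
    rw [hBr.add_left, hy.map_genA, hz.map_genA, ← add_smul, add_add_add_comm]
    rfl
  map_genB x i j := by rw [hBr.add_left, hy.map_genB, hz.map_genB, add_zero]

lemma sum {ι : Type*} (s : Finset ι) (f : ι → AM n sL sR) (w : ι → Side → Fin n → ZMod 2)
    (h : ∀ t ∈ s, IsGradingOp (Br (f t)) (w t)) :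
    IsGradingOp (Br (∑ t ∈ s, f t)) (∑ t ∈ s, w t) where
  map_genA x i j := by
    rw [hBr.sum_left, sum_congr rfl fun t ht => (h t ht).map_genA x i j, ← sum_smul,
      sum_add_distrib]
    simp only [Finset.sum_apply]
  map_genB x i j := by
    rw [hBr.sum_left]
    exact sum_eq_zero fun t ht => (h t ht).map_genB x i j

lemma map_quadA {y : AM n sL sR} {w : Side → Fin n → ZMod 2} (hy : IsGradingOp (Br y) w)
    (x : Side) (i j : Fin n) : Br y (quadA x i j) = (w x i + w x j) • quadA x i j := by
  rw [quadA, hBr.map_sum, smul_sum]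
  refine sum_congr rfl fun m _ => ?_
  rw [hBr.map_mul, hy.map_genA, hy.map_genA, smul_mul_assoc, mul_smul_comm, ← add_smul]
  congr 1
  grind

end IsGradingOp

section Gamma

variable {n : ℕ} [NeZero n] {sL sR : Equiv.Perm (Fin n)} {Br : AM n sL sR → AM n sL sR → AM n sL sR}

lemma stepGen_eq (t : ℕ) :
    stepGen sL sR t = genB (stepSide t) (min (pathSeq sL sR t) (pathSeq sL sR (t + 1)))
      (max (pathSeq sL sR t) (pathSeq sL sR (t + 1))) := by
  unfold stepGen stepSide
  split_ifs <;> rfl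

lemma IsGradingOp.map_gammaEl (hBr : IsSymmBiderivation Br) {y : AM n sL sR}
    {w : Side → Fin n → ZMod 2} (hy : IsGradingOp (Br y) w)
    (hvisit : ∀ i : Fin n, ∃ m, pathSeq sL sR m = i) (a : Fin n) :
    Br y (gammaEl sL sR hvisit a) = 0 := by
  rw [gammaEl, hBr.map_sum]
  exact sum_eq_zero fun t _ => by rw [stepGen_eq]; exact hy.map_genB _ _ _

variable (hne : ∀ (x : Side) a, x.perm sL sR a ≠ a)
  (hinv : ∀ x : Side, Function.Involutive (x.perm sL sR))

include hne hinv in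
lemma IsSFTBracket.isGradingOp_stepGen (hBr : IsSFTBracket sL sR Br) (t : ℕ) :
    IsGradingOp (Br (stepGen sL sR t)) fun x b => if x = stepSide t then
      (if b = pathSeq sL sR t then 1 else 0) + (if b = pathSeq sL sR (t + 1) then 1 else 0)
      else 0 := by
  have hstep := pathSeq_succ (sL := sL) (sR := sR) t
  rw [stepGen_eq]
  rcases lt_or_gt_of_ne (hne (stepSide t) (pathSeq sL sR t)) with h | h
  · rw [← hstep] at h
    rw [min_eq_right h.le, max_eq_left h.le]
    convert hBr.isGradingOp_genB h (by rw [hstep, hinv]) using 4 with x b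
    rw [add_comm]
  · rw [← hstep] at h
    rw [min_eq_left h.le, max_eq_right h.le]
    exact hBr.isGradingOp_genB h hstep.symm

noncomputable def gammaWeight (hvisit : ∀ i : Fin n, ∃ m, pathSeq sL sR m = i) (a : Fin n)
    (x : Side) (b : Fin n) : ZMod 2 :=
  if sideStep n x (visitTime hvisit b) < visitTime hvisit a then 1 else 0

variable (hvisit : ∀ i : Fin n, ∃ m, pathSeq sL sR m = i)

include hne hinv in
lemma IsSFTBracket.isGradingOp_gammaEl (hBr : IsSFTBracket sL sR Br) (a : Fin n) :
    IsGradingOp (Br (gammaEl sL sR hvisit a)) (gammaWeight hvisit a) := by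
  rw [show gammaEl sL sR hvisit a = ∑ t ∈ range (visitTime hvisit a), stepGen sL sR t from rfl]
  convert IsGradingOp.sum hBr.isSymmBiderivation (range (visitTime hvisit a)) (stepGen sL sR) _
    fun t _ => hBr.isGradingOp_stepGen hne hinv t
  funext x b
  have ha := visitTime_lt hvisit hne hinv a
  rw [gammaWeight, Finset.sum_apply, Finset.sum_apply, ← sum_ite_stepSide ha.le]
  refine sum_congr rfl fun t ht => ?_
  have ht := mem_range.1 ht
  simp only [eq_pathSeq_iff hvisit hne hinv (ht.trans ha),
    eq_pathSeq_iff hvisit hne hinv (show t + 1 < n by omega)]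

include hne hinv in
lemma IsSFTBracket.gammaEl_add_gammaEl_genA (hBr : IsSFTBracket sL sR Br) (i j : Fin n)
    (x : Side) (k l : Fin n) :
    Br (gammaEl sL sR hvisit i + gammaEl sL sR hvisit j) (genA x k l)
      = (gammaWeight hvisit i x k + gammaWeight hvisit j x k
        + (gammaWeight hvisit i x l + gammaWeight hvisit j x l)) • genA x k l :=
  ((hBr.isGradingOp_gammaEl hne hinv hvisit i).add hBr.isSymmBiderivation
    (hBr.isGradingOp_gammaEl hne hinv hvisit j)).map_genA x k l

include hne hinv in
lemma gammaWeight_add_gammaWeight (x : Side) (a b : Fin n) :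
    gammaWeight hvisit a x b + gammaWeight hvisit b x a
      = 1 + (if a = b then 1 else 0) + (if x = .L ∧ a = 0 then 1 else 0)
        + (if x = .L ∧ b = 0 then 1 else 0) := by
  rw [gammaWeight, gammaWeight, sideStep_lt_add_sideStep_lt (visitTime_lt hvisit hne hinv a)
    (visitTime_lt hvisit hne hinv b)]
  simp only [(visitTime_injective hvisit).eq_iff, visitTime_eq_zero_iff]

include hne hinv in
lemma gammaWeight_R_add_gammaWeight_L (a b : Fin n) :
    gammaWeight hvisit a .R b + gammaWeight hvisit b .L a = 1 + if a = 0 then 1 else 0 := by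
  rw [gammaWeight, gammaWeight, sideStep_R_lt_add_sideStep_L_lt (visitTime_lt hvisit hne hinv b)]
  simp only [visitTime_eq_zero_iff]

include hne hinv in
lemma gammaWeight_cross (x : Side) (i j k l : Fin n) :
    gammaWeight hvisit i x k + gammaWeight hvisit j x k
        + (gammaWeight hvisit i x l + gammaWeight hvisit j x l)
      + (gammaWeight hvisit k x i + gammaWeight hvisit l x i
        + (gammaWeight hvisit k x j + gammaWeight hvisit l x j))
      = (if i = k then 1 else 0) + (if i = l then 1 else 0) + (if j = k then 1 else 0)
        + (if j = l then 1 else 0) := by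
  have hik := gammaWeight_add_gammaWeight hne hinv hvisit x i k
  have hil := gammaWeight_add_gammaWeight hne hinv hvisit x i l
  have hjk := gammaWeight_add_gammaWeight hne hinv hvisit x j k
  have hjl := gammaWeight_add_gammaWeight hne hinv hvisit x j l
  grind

include hne hinv in
lemma gammaWeight_cross_R_L (i j k l : Fin n) :
    gammaWeight hvisit i .R k + gammaWeight hvisit j .R k
        + (gammaWeight hvisit i .R l + gammaWeight hvisit j .R l)
      + (gammaWeight hvisit k .L i + gammaWeight hvisit l .L i
        + (gammaWeight hvisit k .L j + gammaWeight hvisit l .L j)) = 0 := by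
  have hik := gammaWeight_R_add_gammaWeight_L hne hinv hvisit i k
  have hil := gammaWeight_R_add_gammaWeight_L hne hinv hvisit i l
  have hjk := gammaWeight_R_add_gammaWeight_L hne hinv hvisit j k
  have hjl := gammaWeight_R_add_gammaWeight_L hne hinv hvisit j l
  grind

end Gamma

section StringDifferential

variable {n : ℕ} [NeZero n] {sL sR : Equiv.Perm (Fin n)}
  {hvisit : ∀ i : Fin n, ∃ m, pathSeq sL sR m = i}
  {Dstr : Derivation (ZMod 2) (AM n sL sR) (AM n sL sR)}
  (hDstr : ∀ g : MGen n sL sR, Dstr (X g) = deltaStrVal sL sR hvisit g)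
include hDstr

lemma Dstr_genA (x : Side) {i j : Fin n} (hij : i < j) :
    Dstr (genA x i j)
      = (gammaEl sL sR hvisit i + gammaEl sL sR hvisit j) * genA x i j + quadA x i j := by
  rw [quadA, ← filter_lt_lt_eq_Ioo, sum_filter]
  cases x
  exacts [(congrArg Dstr (dif_pos hij)).trans (hDstr _),
    (congrArg Dstr (dif_pos hij)).trans (hDstr _)]

lemma Dstr_genB (x : Side) (i j : Fin n) : Dstr (genB x i j) = genB x i j ^ 2 := by
  by_cases h : i < j ∧ x.perm sL sR i = j
  · cases x
    exacts [(congrArg Dstr (dif_pos h)).trans (hDstr _),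
      (congrArg Dstr (dif_pos h)).trans (hDstr _)]
  · rw [genB_of_not_valid h, map_zero, sq, mul_zero]

end StringDifferential

section GeneratorPairs

variable {n : ℕ} [NeZero n] {sL sR : Equiv.Perm (Fin n)}
  (hne : ∀ (x : Side) a, x.perm sL sR a ≠ a)
  (hinv : ∀ x : Side, Function.Involutive (x.perm sL sR))
  {hvisit : ∀ i : Fin n, ∃ m, pathSeq sL sR m = i}
  {Dstr : Derivation (ZMod 2) (AM n sL sR) (AM n sL sR)}
  (hDstr : ∀ g : MGen n sL sR, Dstr (X g) = deltaStrVal sL sR hvisit g)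
  {Br : AM n sL sR → AM n sL sR → AM n sL sR}

include hDstr

lemma br_Dstr_genA (hBr : IsSymmBiderivation Br) (x : Side) {i j : Fin n} (hij : i < j)
    (z : AM n sL sR) :
    Br (Dstr (genA x i j)) z
      = Br (gammaEl sL sR hvisit i + gammaEl sL sR hvisit j) z * genA x i j
        + (gammaEl sL sR hvisit i + gammaEl sL sR hvisit j) * Br (genA x i j) z
        + Br (quadA x i j) z := by
  rw [Dstr_genA hDstr x hij, hBr.add_left, hBr.mul_left]

lemma IsGradingOp.map_Dstr_genA (hBr : IsSymmBiderivation Br) {y : AM n sL sR}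
    {w : Side → Fin n → ZMod 2} (hy : IsGradingOp (Br y) w) (x : Side) {i j : Fin n}
    (hij : i < j) : Br y (Dstr (genA x i j)) = (w x i + w x j) • Dstr (genA x i j) := by
  rw [Dstr_genA hDstr x hij, hBr.map_add, hBr.map_mul, hBr.map_add, hy.map_gammaEl hBr,
    hy.map_gammaEl hBr, hy.map_genA, hy.map_quadA hBr, add_zero, zero_mul, zero_add, smul_add,
    mul_smul_comm]

variable (hBr : IsSFTBracket sL sR Br)
include hBr

lemma isBracketDerivationAt_genB_genB (x y : Side) (i j k l : Fin n) :
    IsBracketDerivationAt Dstr Br (genB x i j) (genB y k l) := by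
  have hB := hBr.isSymmBiderivation
  unfold IsBracketDerivationAt
  rw [hBr.genB_genB, map_zero, Dstr_genB hDstr, Dstr_genB hDstr, sq, sq,
    hB.symm (genB x i j * genB x i j), hB.map_mul_self, hB.map_mul_self, add_zero]

lemma isBracketDerivationAt_genB_genA {y : Side} {k l : Fin n} (hkl : k < l)
    (hperm : y.perm sL sR k = l) (x : Side) {i j : Fin n} (hij : i < j) :
    IsBracketDerivationAt Dstr Br (genB y k l) (genA x i j) := by
  have hB := hBr.isSymmBiderivation
  have hE := hBr.isGradingOp_genB hkl hperm
  unfold IsBracketDerivationAt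
  rw [hE.map_genA, Dstr.map_smul, Dstr_genB hDstr, sq, hB.symm (genB y k l * genB y k l),
    hB.map_mul_self, zero_add, hE.map_Dstr_genA hDstr hB x hij]

include hne hinv

lemma isBracketDerivationAt_genA_L_genA_R {i j k l : Fin n} (hij : i < j) (hkl : k < l) :
    IsBracketDerivationAt Dstr Br (genA .L i j) (genA .R k l) := by
  have hB := hBr.isSymmBiderivation
  have hLR : ∀ a b c d : Fin n, Br (genA .L a b) (genA .R c d) = 0 :=
    hBr.genA_genA_of_ne (by decide)
  have hRL : ∀ a b c d : Fin n, Br (genA .R a b) (genA .L c d) = 0 :=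
    hBr.genA_genA_of_ne (by decide)
  unfold IsBracketDerivationAt
  rw [hLR, map_zero, br_Dstr_genA hDstr hB .L hij, hB.symm (genA .L i j) (Dstr _),
    br_Dstr_genA hDstr hB .R hkl, hBr.gammaEl_add_gammaEl_genA hne hinv,
    hBr.gammaEl_add_gammaEl_genA hne hinv, hLR, hRL, quadA, hB.sum_left, quadA, hB.sum_left]
  simp only [hB.mul_left, hLR, hRL, zero_mul, mul_zero, add_zero, sum_const_zero,
    smul_mul_assoc, mul_comm (genA .R k l), ← add_smul, gammaWeight_cross_R_L hne hinv hvisit,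
    zero_smul]

lemma isBracketDerivationAt_genA_genA_of_lt_of_lt (x : Side) {i j l : Fin n} (hij : i < j)
    (hjl : j < l) : IsBracketDerivationAt Dstr Br (genA x i j) (genA x j l) := by
  have hB := hBr.isSymmBiderivation
  have hil := hij.trans hjl
  have hcoef := congrArg (C : ZMod 2 → AM n sL sR) (gammaWeight_cross hne hinv hvisit x i j j l)
  simp only [hij.ne, hil.ne, hjl.ne, if_true, if_false, add_zero, zero_add, map_add,
    map_one] at hcoef
  unfold IsBracketDerivationAt
  rw [hBr.genA_genA hij hjl, if_pos rfl, if_neg hil.ne, add_zero, Dstr_genA hDstr x hil,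
    br_Dstr_genA hDstr hB x hij, hB.symm (genA x i j) (Dstr _), br_Dstr_genA hDstr hB x hjl,
    hBr.gammaEl_add_gammaEl_genA hne hinv, hBr.gammaEl_add_gammaEl_genA hne hinv,
    hBr.genA_genA hij hjl, hBr.genA_genA hjl hij, hBr.quadA_genA x i j hjl,
    hBr.quadA_genA x j l hij, quadA, sum_Ioo_eq_sum_Ioo_add_add_sum_Ioo hij hjl]
  simp only [mem_Ioo, hil.ne, hil.ne', lt_irrefl, hjl.not_gt, hij.not_gt, false_and, and_false,
    if_true, if_false, add_zero, zero_add, zero_smul, smul_eq_C_mul, map_add]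
  -- By `hcoef` the γ-terms add up to `α_{ij} α_{jl}`, the term of `quadA x i l` that the two
  -- partial sums miss.
  grind

lemma isBracketDerivationAt_genA_genA_of_ne (x : Side) {i j k l : Fin n} (hij : i < j)
    (hkl : k < l) (hjk : j ≠ k) (hil : i ≠ l) :
    IsBracketDerivationAt Dstr Br (genA x i j) (genA x k l) := by
  have hB := hBr.isSymmBiderivation
  have hbr : Br (genA x i j) (genA x k l) = 0 := by
    rw [hBr.genA_genA hij hkl, if_neg hjk, if_neg hil, add_zero]
  have hcoef := congrArg (C : ZMod 2 → AM n sL sR) (gammaWeight_cross hne hinv hvisit x i j k l)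
  have hIoo := congrArg (C : ZMod 2 → AM n sL sR) (ite_Ioo_add_ite_Ioo hij hkl)
  have hswap := ite_add_ite_smul_genA_mul_genA (sL := sL) (sR := sR) x i j k l
  simp only [hjk, hil, if_false, add_zero, map_add] at hcoef hIoo
  unfold IsBracketDerivationAt
  rw [hbr, map_zero, br_Dstr_genA hDstr hB x hij, hB.symm (genA x i j) (Dstr _),
    br_Dstr_genA hDstr hB x hkl, hBr.gammaEl_add_gammaEl_genA hne hinv,
    hBr.gammaEl_add_gammaEl_genA hne hinv, hbr, hB.symm (genA x k l), hbr,
    hBr.quadA_genA x i j hkl, hBr.quadA_genA x k l hij]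
  simp only [hjk, hil, Ne.symm hjk, Ne.symm hil, if_false, add_zero, mul_zero, smul_eq_C_mul,
    map_add] at hswap ⊢
  -- The γ-terms (`hcoef`) and the quadratic terms (`hIoo`, `hswap`) are both
  -- `([i = k] + [j = l]) α_{ij} α_{kl}`, so they cancel.
  grind

lemma isBracketDerivationAt_genA_genA {x y : Side} {i j k l : Fin n} (hij : i < j)
    (hkl : k < l) : IsBracketDerivationAt Dstr Br (genA x i j) (genA y k l) := by
  have hB := hBr.isSymmBiderivation
  by_cases hxy : x = y
  · subst hxy
    by_cases hjk : j = k
    · subst hjk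
      exact isBracketDerivationAt_genA_genA_of_lt_of_lt hne hinv hDstr hBr x hij hkl
    by_cases hil : i = l
    · subst hil
      exact (isBracketDerivationAt_genA_genA_of_lt_of_lt hne hinv hDstr hBr x hkl hij).symm hB
    exact isBracketDerivationAt_genA_genA_of_ne hne hinv hDstr hBr x hij hkl hjk hil
  · cases x <;> cases y <;> first
      | exact absurd rfl hxy
      | exact isBracketDerivationAt_genA_L_genA_R hne hinv hDstr hBr hij hkl
      | exact (isBracketDerivationAt_genA_L_genA_R hne hinv hDstr hBr hkl hij).symm hB

lemma isBracketDerivationAt_X (g g' : MGen n sL sR) :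
    IsBracketDerivationAt Dstr Br (X g) (X g') := by
  have hB := hBr.isSymmBiderivation
  rcases X_eq_genA_or_genB g with ⟨x, i, j, hij, hg⟩ | ⟨x, i, j, hij, hx, hg⟩ <;>
    rcases X_eq_genA_or_genB g' with ⟨y, k, l, hkl, hg'⟩ | ⟨y, k, l, hkl, hy, hg'⟩ <;>
    rw [hg, hg']
  · exact isBracketDerivationAt_genA_genA hne hinv hDstr hBr hij hkl
  · exact (isBracketDerivationAt_genB_genA hDstr hBr hkl hy x hij).symm hB
  · exact isBracketDerivationAt_genB_genA hDstr hBr hij hx y hkl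
  · exact isBracketDerivationAt_genB_genB hDstr hBr x y i j k l

end GeneratorPairs

theorem middle_deltaStr_derivation_of_bracket_general {n : ℕ} [NeZero n]
    (sL sR : Equiv.Perm (Fin n))
    (hsLne : ∀ i, sL i ≠ i) (hsLinv : ∀ i, sL (sL i) = i)
    (hsRne : ∀ i, sR i ≠ i) (hsRinv : ∀ i, sR (sR i) = i)
    (hvisit : ∀ i : Fin n, ∃ m, pathSeq sL sR m = i)
    (Dstr : Derivation (ZMod 2) (AM n sL sR) (AM n sL sR))
    (hDstr : ∀ g : MGen n sL sR, Dstr (X g) = deltaStrVal sL sR hvisit g)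
    (Br : AM n sL sR → AM n sL sR → AM n sL sR)
    (hBr : IsSFTBracket sL sR Br) :
    ∀ x y : AM n sL sR, Dstr (Br x y) = Br (Dstr x) y + Br x (Dstr y) := by
  have hne : ∀ (x : Side) a, x.perm sL sR a ≠ a := by
    rintro (_ | _)
    exacts [hsLne, hsRne]
  have hinv : ∀ x : Side, Function.Involutive (x.perm sL sR) := by
    rintro (_ | _)
    exacts [hsLinv, hsRinv]
  exact isBracketDerivationAt_of_X Dstr hBr.isSymmBiderivation hBr.map_C
    (isBracketDerivationAt_X hne hinv hDstr hBr)

/-- The string differential is a derivation of the SFT bracket. -/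
theorem middle_deltaStr_derivation_of_bracket {n : ℕ} [NeZero n] (hn2 : 2 ≤ n) (hnEven : Even n)
    (sL sR : Equiv.Perm (Fin n))
    (hsLne : ∀ i, sL i ≠ i) (hsLinv : ∀ i, sL (sL i) = i)
    (hsRne : ∀ i, sR i ≠ i) (hsRinv : ∀ i, sR (sR i) = i)
    (hvisit : ∀ i : Fin n, ∃ m, pathSeq sL sR m = i)
    (Dstr : Derivation (ZMod 2) (AM n sL sR) (AM n sL sR))
    (hDstr : ∀ g : MGen n sL sR, Dstr (X g) = deltaStrVal sL sR hvisit g)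
    (Br : AM n sL sR → AM n sL sR → AM n sL sR)
    (hBr : IsSFTBracket sL sR Br) :
    ∀ x y : AM n sL sR, Dstr (Br x y) = Br (Dstr x) y + Br x (Dstr y) :=
  middle_deltaStr_derivation_of_bracket_general sL sR hsLne hsLinv hsRne hsRinv hvisit Dstr hDstr Br
    hBr
end

section
/- Double bracketing with the Hamiltonian equals bracketing with the quadratic Hamiltonian: for all x ∈ A^M, {h^M, {h^M, x}} = {h^M_2, x}. -/
open MvPolynomial

/-!
Both `x ↦ {h, {h, x}}` and `x ↦ {h₂, x}` are derivations of the polynomial algebra `A^M` (the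
square of a derivation is again one in characteristic two), so it suffices to compare them on
generators. The roles of `L` and `R` are symmetric, so each generator computation is done once,
for an abstract pair `(a, b)` of mutually commuting families of strictly upper triangular matrix
units. On `a_pq` both sides expand into the same double sums, except for two sums which agree
after swapping the summation indices and hence cancel in characteristic two. A generator
`β_pq` acts on `a_ij` by the weight `[i ∈ {p,q}] + [j ∈ {p,q}]`, and both sides become the same
triple sum because these weights add up along `i < k < j` modulo two.
-/

structure IsBiderivation {R : Type*} [CommRing R] (Br : R → R → R) : Prop where
  comm : ∀ x y, Br x y = Br y x
  add_right : ∀ x y z, Br x (y + z) = Br x y + Br x z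
  mul_right : ∀ x y z, Br x (y * z) = Br x y * z + y * Br x z

namespace IsBiderivation

variable {R : Type*} [CommRing R] {Br : R → R → R} (hBr : IsBiderivation Br)
include hBr

def addMonoidHom (x : R) : R →+ R :=
  AddMonoidHom.mk' (Br x) (hBr.add_right x)

lemma zero_right (x : R) : Br x 0 = 0 :=
  map_zero (hBr.addMonoidHom x)

lemma one_right (x : R) : Br x 1 = 0 := by
  simpa using hBr.mul_right x 1 1

lemma sum_right {ι : Type*} (s : Finset ι) (f : ι → R) (x : R) :
    Br x (∑ i ∈ s, f i) = ∑ i ∈ s, Br x (f i) :=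
  map_sum (hBr.addMonoidHom x) f s

lemma ite_right (P : Prop) [Decidable P] (x y : R) :
    Br x (if P then y else 0) = if P then Br x y else 0 := by
  split_ifs
  · rfl
  · exact hBr.zero_right x

def derivation (m : ℕ) [Algebra (ZMod m) R] (x : R) : Derivation (ZMod m) R R where
  toLinearMap := (hBr.addMonoidHom x).toZModLinearMap m
  map_one_eq_zero' := hBr.one_right x
  leibniz' a b := by
    simp [addMonoidHom, hBr.mul_right]
    ring

end IsBiderivation

def Derivation.sqOfCharTwo {S A : Type*} [CommSemiring S] [CommRing A] [Algebra S A] [CharP A 2]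
    (D : Derivation S A A) : Derivation S A A where
  toLinearMap := D.toLinearMap ∘ₗ D.toLinearMap
  map_one_eq_zero' := by simp
  leibniz' a b := by
    change D (D (a * b)) = a * D (D b) + b * D (D a)
    simp only [Derivation.leibniz, map_add, smul_eq_mul]
    linear_combination CharTwo.add_self_eq_zero (D a * D b)

lemma sum_sum_sum_rotate {ι M : Type*} [Fintype ι] [AddCommMonoid M]
    (f : ι → ι → ι → M) :
    ∑ i, ∑ j, ∑ k, f i j k = ∑ j, ∑ k, ∑ i, f i j k := by
  rw [Finset.sum_comm]
  exact Finset.sum_congr rfl fun _ _ => Finset.sum_comm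

section CharTwo

variable {R : Type*} [CommRing R] [CharP R 2]

lemma sum_sum_add_swap_eq_zero {ι : Type*} [Fintype ι] (u : ι → ι → R) :
    ∑ c, ∑ d, (u d c + u c d) = 0 := by
  simp only [Finset.sum_add_distrib]
  rw [Finset.sum_comm]
  exact CharTwo.add_self_eq_zero _

lemma ite_xor_eq_add (p q r : Prop) [Decidable p] [Decidable q] [Decidable r] (x : R) :
    (if Xor p r then x else 0) = (if Xor p q then x else 0) + (if Xor q r then x else 0) := by
  by_cases p <;> by_cases q <;> by_cases r <;> simp [*, CharTwo.add_self_eq_zero]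

end CharTwo

section Hamiltonian

variable {R ι : Type*} [CommRing R] [Fintype ι]

def hamiltonian (a b : ι → ι → R) : R := ∑ i, ∑ j, a i j * b i j

def quadHamiltonianTerm (a b : ι → ι → R) (i k j : ι) : R :=
  b i k * b k j * a i j + a i k * a k j * b i j

def quadHamiltonian (a b : ι → ι → R) : R :=
  ∑ i, ∑ k, ∑ j, quadHamiltonianTerm a b i k j

lemma hamiltonian_comm (a b : ι → ι → R) : hamiltonian a b = hamiltonian b a := by
  simp only [hamiltonian, mul_comm]

lemma quadHamiltonian_comm (a b : ι → ι → R) : quadHamiltonian a b = quadHamiltonian b a := by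
  simp only [quadHamiltonian, quadHamiltonianTerm, add_comm]

variable {Br : R → R → R} {a b : ι → ι → R} (hBr : IsBiderivation Br) (P : ι → Prop)
  [DecidablePred P] {y : R} (hya : ∀ i j, Br y (a i j) = if Xor (P i) (P j) then a i j else 0)
  (hyb : ∀ i j, Br y (b i j) = 0)
include hBr hya hyb

lemma bracket_hamiltonian_of_xor :
    Br (hamiltonian a b) y = ∑ i, ∑ j, if Xor (P i) (P j) then a i j * b i j else 0 := by
  rw [hBr.comm, hamiltonian]
  simp only [hBr.sum_right, hBr.mul_right, hya, hyb, mul_zero, add_zero, ite_mul, zero_mul]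

lemma bracket_quadHamiltonian_of_xor [CharP R 2] :
    Br (quadHamiltonian a b) y = ∑ i, ∑ k, ∑ j,
      ((if Xor (P i) (P k) then quadHamiltonianTerm a b i k j else 0)
        + (if Xor (P k) (P j) then quadHamiltonianTerm a b i k j else 0)) := by
  rw [hBr.comm, quadHamiltonian]
  simp only [quadHamiltonianTerm, hBr.sum_right, hBr.add_right, hBr.mul_right, hya, hyb,
    mul_zero, zero_mul, add_zero, zero_add]
  refine Finset.sum_congr rfl fun i _ => Finset.sum_congr rfl fun k _ =>
    Finset.sum_congr rfl fun j _ => ?_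
  rw [ite_xor_eq_add (P i) (P k) (P j)]
  split_ifs <;> ring

end Hamiltonian

section MatrixUnits

variable {R ι : Type*} [CommRing R] [LinearOrder ι]

/-- `a i j` (`i < j`) bracket like the matrix units `E_ij` under the commutator, signs dropped. -/
structure IsMatrixUnitFamily (Br : R → R → R) (a : ι → ι → R) : Prop where
  eq_zero_of_not_lt : ∀ {i j}, ¬ i < j → a i j = 0
  bracket : ∀ {i j k l}, i < j → k < l →
    Br (a i j) (a k l) = (if j = k then a i l else 0) + (if i = l then a k j else 0)

structure IsMatrixUnitPair (Br : R → R → R) (a b : ι → ι → R) : Prop where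
  left : IsMatrixUnitFamily Br a
  right : IsMatrixUnitFamily Br b
  bracket_left_right : ∀ i j k l, Br (a i j) (b k l) = 0

variable {Br : R → R → R} {a b : ι → ι → R}

lemma IsMatrixUnitPair.symm (hBr : IsBiderivation Br) (hab : IsMatrixUnitPair Br a b) :
    IsMatrixUnitPair Br b a :=
  ⟨hab.right, hab.left, fun i j k l => (hBr.comm _ _).trans (hab.bracket_left_right k l i j)⟩

namespace IsMatrixUnitFamily

lemma bracket_mul (ha : IsMatrixUnitFamily Br a) {p q i j : ι} (hpq : p < q) {x : R}
    (hx : ¬ i < j → x = 0) :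
    Br (a p q) (a i j) * x =
      ((if q = i then a p j else 0) + (if p = j then a i q else 0)) * x := by
  by_cases hij : i < j
  · rw [ha.bracket hpq hij]
  · rw [hx hij, mul_zero, mul_zero]

lemma bracket_eq_ite (hBr : IsBiderivation Br) (ha : IsMatrixUnitFamily Br a) {p q : ι}
    (hpq : p < q) (i j : ι) :
    Br (a p q) (a i j) =
      (if q = i ∧ i < j then a p j else 0) + (if p = j ∧ i < j then a i q else 0) := by
  by_cases hij : i < j
  · simp only [hij, and_true, ha.bracket hpq hij]
  · simp only [hij, and_false, if_false, add_zero, ha.eq_zero_of_not_lt hij, hBr.zero_right]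

end IsMatrixUnitFamily

variable [Fintype ι] (hBr : IsBiderivation Br) (hab : IsMatrixUnitPair Br a b)
include hBr hab

lemma bracket_hamiltonian_left {p q : ι} (hpq : p < q) :
    Br (hamiltonian a b) (a p q) = ∑ c, (a p c * b q c + a c q * b c p) := by
  have term : ∀ i j, Br (a p q) (a i j * b i j) =
      ((if q = i then a p j else 0) + (if p = j then a i q else 0)) * b i j := fun i j => by
    rw [hBr.mul_right, hab.bracket_left_right, mul_zero, add_zero,
      hab.left.bracket_mul hpq hab.right.eq_zero_of_not_lt]
  rw [hBr.comm, hamiltonian, hBr.sum_right]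
  simp only [hBr.sum_right, term, add_mul, ite_mul, zero_mul, Finset.sum_add_distrib,
    Finset.sum_ite_eq, Finset.mem_univ, if_true, Finset.sum_ite_irrel, Finset.sum_const_zero]

lemma bracket_hamiltonian_right {p q : ι} (hpq : p < q) :
    Br (hamiltonian a b) (b p q) = ∑ c, (b p c * a q c + b c q * a c p) := by
  rw [hamiltonian_comm]
  exact bracket_hamiltonian_left hBr (hab.symm hBr) hpq

lemma bracket_quadHamiltonian_left {p q : ι} (hpq : p < q) :
    Br (quadHamiltonian a b) (a p q) = ∑ c, ∑ d,
      (b q c * b c d * a p d + b d c * b c p * a d q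
        + (if q < c then a p c * a c d * b q d else 0)
        + (if q < c then a d q * a p c * b d c else 0)
        + (if c < p then a c q * a p d * b c d else 0)
        + (if c < p then a d c * a c q * b d p else 0)) := by
  have bba : ∀ i k j, Br (a p q) (b i k * b k j * a i j) =
      b i k * b k j * ((if q = i then a p j else 0) + (if p = j then a i q else 0)) :=
    fun i k j => by
      simp only [hBr.mul_right, hab.bracket_left_right, mul_zero, zero_mul, zero_add]
      rw [mul_comm, hab.left.bracket_mul hpq ?_, mul_comm]
      intro hij
      by_cases hik : i < k
      · rw [hab.right.eq_zero_of_not_lt fun hkj => hij (hik.trans hkj), mul_zero]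
      · rw [hab.right.eq_zero_of_not_lt hik, zero_mul]
  have aab : ∀ i k j, Br (a p q) (a i k * a k j * b i j) =
      (Br (a p q) (a i k) * a k j + a i k * Br (a p q) (a k j)) * b i j := fun i k j => by
    rw [hBr.mul_right, hBr.mul_right, hab.bracket_left_right, mul_zero, add_zero]
  rw [hBr.comm, quadHamiltonian]
  simp only [quadHamiltonianTerm, hBr.sum_right, hBr.add_right, bba, aab,
    hab.left.bracket_eq_ite hBr hpq, add_mul, mul_add, ite_mul, zero_mul, mul_ite, mul_zero,
    Finset.sum_add_distrib, Finset.sum_ite_eq, Finset.mem_univ, if_true, Finset.sum_ite_irrel,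
    Finset.sum_const_zero, ite_and]
  simp only [Finset.ite_sum_zero]
  rw [Finset.sum_comm (f := fun c d => b d c * b c p * a d q),
    Finset.sum_comm (f := fun c d => if q < c then a d q * a p c * b d c else 0),
    Finset.sum_comm (f := fun c d => if c < p then a d c * a c q * b d p else 0)]
  abel

lemma bracket_hamiltonian_bracket_hamiltonian_left [CharP R 2] {p q : ι} (hpq : p < q) :
    Br (hamiltonian a b) (Br (hamiltonian a b) (a p q)) = ∑ c, ∑ d,
      (b q c * b c d * a p d + b d c * b c p * a d q
        + (if q < c then a p c * a c d * b q d else 0)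
        + (if q < c then a d q * a p c * b d c else 0)
        + (if c < p then a c q * a p d * b c d else 0)
        + (if c < p then a d c * a c q * b d p else 0)) := by
  have upper : ∀ c, Br (hamiltonian a b) (a p c * b q c) = ∑ d,
      (b q c * b c d * a p d + a d c * b q c * b d p
        + (if q < c then a p c * a c d * b q d else 0)
        + (if q < c then a d q * a p c * b d c else 0)) := fun c => by
    by_cases hqc : q < c
    · rw [hBr.mul_right, bracket_hamiltonian_left hBr hab (hpq.trans hqc),
        bracket_hamiltonian_right hBr hab hqc, Finset.sum_mul, Finset.mul_sum,
        ← Finset.sum_add_distrib]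
      refine Finset.sum_congr rfl fun d _ => ?_
      simp only [if_pos hqc]
      ring
    · simp [hab.right.eq_zero_of_not_lt hqc, hBr.zero_right, hqc]
  have lower : ∀ c, Br (hamiltonian a b) (a c q * b c p) = ∑ d,
      (b d c * b c p * a d q + a c d * b q d * b c p
        + (if c < p then a c q * a p d * b c d else 0)
        + (if c < p then a d c * a c q * b d p else 0)) := fun c => by
    by_cases hcp : c < p
    · rw [hBr.mul_right, bracket_hamiltonian_left hBr hab (hcp.trans hpq),
        bracket_hamiltonian_right hBr hab hcp, Finset.sum_mul, Finset.mul_sum,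
        ← Finset.sum_add_distrib]
      refine Finset.sum_congr rfl fun d _ => ?_
      simp only [if_pos hcp]
      ring
    · simp [hab.right.eq_zero_of_not_lt hcp, hBr.zero_right, hcp]
  rw [bracket_hamiltonian_left hBr hab hpq, hBr.sum_right]
  simp only [hBr.add_right, upper, lower]
  -- the leftover terms `a d c * b q c * b d p` and `a c d * b q d * b c p` cancel in pairs
  rw [← sub_eq_zero, ← sum_sum_add_swap_eq_zero fun c d => a c d * b q d * b c p]
  simp only [← Finset.sum_add_distrib, ← Finset.sum_sub_distrib]
  refine Finset.sum_congr rfl fun c _ => Finset.sum_congr rfl fun d _ => ?_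
  ring

lemma double_bracket_hamiltonian_left [CharP R 2] {p q : ι} (hpq : p < q) :
    Br (hamiltonian a b) (Br (hamiltonian a b) (a p q)) = Br (quadHamiltonian a b) (a p q) := by
  rw [bracket_hamiltonian_bracket_hamiltonian_left hBr hab hpq,
    bracket_quadHamiltonian_left hBr hab hpq]

lemma bracket_hamiltonian_mul_self (i j : ι) :
    Br (hamiltonian a b) (a i j * b i j) =
      ∑ c, (quadHamiltonianTerm a b i j c + quadHamiltonianTerm a b c i j) := by
  by_cases hij : i < j
  · rw [hBr.mul_right, bracket_hamiltonian_left hBr hab hij, bracket_hamiltonian_right hBr hab hij,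
      Finset.sum_mul, Finset.mul_sum, ← Finset.sum_add_distrib]
    exact Finset.sum_congr rfl fun c _ => by rw [quadHamiltonianTerm, quadHamiltonianTerm]; ring
  · simp [quadHamiltonianTerm, hab.left.eq_zero_of_not_lt hij, hab.right.eq_zero_of_not_lt hij,
      hBr.zero_right]

variable (P : ι → Prop) [DecidablePred P] {y : R}
  (hya : ∀ i j, Br y (a i j) = if Xor (P i) (P j) then a i j else 0)
  (hyb : ∀ i j, Br y (b i j) = 0)
include hya hyb

lemma bracket_hamiltonian_bracket_hamiltonian_of_xor :
    Br (hamiltonian a b) (Br (hamiltonian a b) y) = ∑ i, ∑ k, ∑ j,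
      ((if Xor (P i) (P k) then quadHamiltonianTerm a b i k j else 0)
        + (if Xor (P k) (P j) then quadHamiltonianTerm a b i k j else 0)) := by
  rw [bracket_hamiltonian_of_xor hBr P hya hyb]
  simp only [hBr.sum_right, hBr.ite_right, bracket_hamiltonian_mul_self hBr hab]
  simp only [Finset.ite_sum_zero, ite_add_zero, Finset.sum_add_distrib]
  congr 1
  exact (sum_sum_sum_rotate (ι := ι) (M := R) _).symm

lemma double_bracket_hamiltonian_of_xor [CharP R 2] :
    Br (hamiltonian a b) (Br (hamiltonian a b) y) = Br (quadHamiltonian a b) y := by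
  rw [bracket_hamiltonian_bracket_hamiltonian_of_xor hBr hab P hya hyb,
    bracket_quadHamiltonian_of_xor hBr P hya hyb]

end MatrixUnits

lemma ite_ite_eq_ite_add_ite {ι M : Type*} [LinearOrder ι] [AddZeroClass M] {i j k l : ι}
    (hij : i < j) (hkl : k < l) (x y : M) :
    (if j = k then x else if i = l then y else 0) =
      (if j = k then x else 0) + (if i = l then y else 0) := by
  by_cases hjk : j = k
  · have hil : i ≠ l := (hij.trans (hjk ▸ hkl)).ne
    simp [hjk, hil]
  · simp [hjk]

section MiddleAlgebra

variable {n : ℕ} {sL sR : Equiv.Perm (Fin n)} {Br : AM n sL sR → AM n sL sR → AM n sL sR}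

lemma IsSFTBracket.isBiderivation (hBr : IsSFTBracket sL sR Br) : IsBiderivation Br :=
  ⟨hBr.1, hBr.2.1, hBr.2.2.1⟩

lemma genAL_eq_X {i j : Fin n} (h : i < j) : genAL sL sR i j = X ⟨.aL i j, h⟩ := dif_pos h

lemma genAR_eq_X {i j : Fin n} (h : i < j) : genAR sL sR i j = X ⟨.aR i j, h⟩ := dif_pos h

lemma genBL_eq_X {i j : Fin n} (h : i < j ∧ sL i = j) : genBL sL sR i j = X ⟨.bL i j, h⟩ :=
  dif_pos h

lemma genBR_eq_X {i j : Fin n} (h : i < j ∧ sR i = j) : genBR sL sR i j = X ⟨.bR i j, h⟩ :=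
  dif_pos h

lemma genAL_eq_zero {i j : Fin n} (h : ¬ i < j) : genAL sL sR i j = 0 := dif_neg h

lemma genAR_eq_zero {i j : Fin n} (h : ¬ i < j) : genAR sL sR i j = 0 := dif_neg h

lemma isMatrixUnitFamily_genAL (hBr : IsSFTBracket sL sR Br) :
    IsMatrixUnitFamily Br (genAL sL sR) where
  eq_zero_of_not_lt := genAL_eq_zero
  bracket hij hkl := (congrArg₂ Br (genAL_eq_X hij) (genAL_eq_X hkl)).trans
    ((hBr.2.2.2 _ _).trans (ite_ite_eq_ite_add_ite hij hkl _ _))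

lemma isMatrixUnitFamily_genAR (hBr : IsSFTBracket sL sR Br) :
    IsMatrixUnitFamily Br (genAR sL sR) where
  eq_zero_of_not_lt := genAR_eq_zero
  bracket hij hkl := (congrArg₂ Br (genAR_eq_X hij) (genAR_eq_X hkl)).trans
    ((hBr.2.2.2 _ _).trans (ite_ite_eq_ite_add_ite hij hkl _ _))

lemma isMatrixUnitPair_genAL_genAR (hBr : IsSFTBracket sL sR Br) :
    IsMatrixUnitPair Br (genAL sL sR) (genAR sL sR) where
  left := isMatrixUnitFamily_genAL hBr
  right := isMatrixUnitFamily_genAR hBr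
  bracket_left_right i j k l := by
    have hB := hBr.isBiderivation
    unfold genAL genAR
    split_ifs
    · exact hBr.2.2.2 _ _
    · exact hB.zero_right _
    · rw [hB.comm]
      exact hB.zero_right _
    · exact hB.zero_right _

lemma bracket_genBL_genAL (hBr : IsSFTBracket sL sR Br) {p q : Fin n} (hpq : p < q ∧ sL p = q)
    (i j : Fin n) : Br (genBL sL sR p q) (genAL sL sR i j) =
      if Xor (i = p ∨ i = q) (j = p ∨ j = q) then genAL sL sR i j else 0 := by
  by_cases hij : i < j
  · exact (congrArg₂ Br (genBL_eq_X hpq) (genAL_eq_X hij)).trans (hBr.2.2.2 _ _)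
  · rw [genAL_eq_zero hij, hBr.isBiderivation.zero_right, ite_self]

lemma bracket_genBR_genAR (hBr : IsSFTBracket sL sR Br) {p q : Fin n} (hpq : p < q ∧ sR p = q)
    (i j : Fin n) : Br (genBR sL sR p q) (genAR sL sR i j) =
      if Xor (i = p ∨ i = q) (j = p ∨ j = q) then genAR sL sR i j else 0 := by
  by_cases hij : i < j
  · exact (congrArg₂ Br (genBR_eq_X hpq) (genAR_eq_X hij)).trans (hBr.2.2.2 _ _)
  · rw [genAR_eq_zero hij, hBr.isBiderivation.zero_right, ite_self]

lemma bracket_genBL_genAR (hBr : IsSFTBracket sL sR Br) {p q : Fin n} (hpq : p < q ∧ sL p = q)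
    (i j : Fin n) : Br (genBL sL sR p q) (genAR sL sR i j) = 0 := by
  by_cases hij : i < j
  · exact (congrArg₂ Br (genBL_eq_X hpq) (genAR_eq_X hij)).trans (hBr.2.2.2 _ _)
  · rw [genAR_eq_zero hij, hBr.isBiderivation.zero_right]

lemma bracket_genBR_genAL (hBr : IsSFTBracket sL sR Br) {p q : Fin n} (hpq : p < q ∧ sR p = q)
    (i j : Fin n) : Br (genBR sL sR p q) (genAL sL sR i j) = 0 := by
  by_cases hij : i < j
  · exact (congrArg₂ Br (genBR_eq_X hpq) (genAL_eq_X hij)).trans (hBr.2.2.2 _ _)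
  · rw [genAL_eq_zero hij, hBr.isBiderivation.zero_right]

lemma hamM_eq_hamiltonian : hamM sL sR = hamiltonian (genAL sL sR) (genAR sL sR) := by
  refine Finset.sum_congr rfl fun i _ => Finset.sum_congr rfl fun j _ => ?_
  by_cases hij : i < j
  · rw [if_pos hij]
  · rw [if_neg hij, genAL_eq_zero hij, zero_mul]

lemma hamM2_eq_quadHamiltonian : hamM2 sL sR = quadHamiltonian (genAL sL sR) (genAR sL sR) := by
  rw [hamM2, quadHamiltonian, ← Finset.sum_add_distrib]
  refine Finset.sum_congr rfl fun i _ => ?_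
  rw [← Finset.sum_add_distrib]
  refine Finset.sum_congr rfl fun k _ => ?_
  rw [← Finset.sum_add_distrib]
  refine Finset.sum_congr rfl fun j _ => ?_
  rw [quadHamiltonianTerm]
  by_cases hik : i < k
  · by_cases hkj : k < j
    · simp only [hik, hkj, and_self, if_true]
    · simp [hkj, genAL_eq_zero hkj, genAR_eq_zero hkj]
  · simp [hik, genAL_eq_zero hik, genAR_eq_zero hik]

lemma double_bracket_hamM_X (hBr : IsSFTBracket sL sR Br) (g : MGen n sL sR) :
    Br (hamM sL sR) (Br (hamM sL sR) (X g)) = Br (hamM2 sL sR) (X g) := by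
  have hB := hBr.isBiderivation
  have hLR := isMatrixUnitPair_genAL_genAR hBr
  rw [hamM_eq_hamiltonian, hamM2_eq_quadHamiltonian]
  obtain ⟨g, hg⟩ := g
  cases g with
  | aL i j =>
    rw [← genAL_eq_X hg]
    exact double_bracket_hamiltonian_left hB hLR hg
  | aR i j =>
    rw [← genAR_eq_X hg, hamiltonian_comm, quadHamiltonian_comm]
    exact double_bracket_hamiltonian_left hB (hLR.symm hB) hg
  | bL p q =>
    rw [← genBL_eq_X hg]
    exact double_bracket_hamiltonian_of_xor hB hLR _ (bracket_genBL_genAL hBr hg)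
      (bracket_genBL_genAR hBr hg)
  | bR p q =>
    rw [← genBR_eq_X hg, hamiltonian_comm, quadHamiltonian_comm]
    exact double_bracket_hamiltonian_of_xor hB (hLR.symm hB) _ (bracket_genBR_genAR hBr hg)
      (bracket_genBR_genAL hBr hg)

end MiddleAlgebra

theorem middle_double_bracket_ham_general {n : ℕ} (sL sR : Equiv.Perm (Fin n))
    (Br : AM n sL sR → AM n sL sR → AM n sL sR)
    (hBr : IsSFTBracket sL sR Br) :
    ∀ x : AM n sL sR, Br (hamM sL sR) (Br (hamM sL sR) x) = Br (hamM2 sL sR) x := by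
  have hB := hBr.isBiderivation
  have key : (hB.derivation 2 (hamM sL sR)).sqOfCharTwo = hB.derivation 2 (hamM2 sL sR) :=
    MvPolynomial.derivation_ext (double_bracket_hamM_X hBr)
  exact fun x => DFunLike.congr_fun key x

/-- `{h^M, {h^M, x}} = {h^M_2, x}` for all `x ∈ A^M`. -/
theorem middle_double_bracket_ham {n : ℕ} [NeZero n] (hn2 : 2 ≤ n) (hnEven : Even n)
    (sL sR : Equiv.Perm (Fin n))
    (hsLne : ∀ i, sL i ≠ i) (hsLinv : ∀ i, sL (sL i) = i)
    (hsRne : ∀ i, sR i ≠ i) (hsRinv : ∀ i, sR (sR i) = i)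
    (hvisit : ∀ i : Fin n, ∃ m, pathSeq sL sR m = i)
    (Br : AM n sL sR → AM n sL sR → AM n sL sR)
    (hBr : IsSFTBracket sL sR Br) :
    ∀ x : AM n sL sR, Br (hamM sL sR) (Br (hamM sL sR) x) = Br (hamM2 sL sR) x :=
  middle_double_bracket_ham_general sL sR Br hBr
end
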